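/- arXiv:2310.19661 — 7 statements merged into one kernel-verified Lean document; each statement's English description precedes it below -/
import Mathlib

section
/- For every u = (i, j) ∈ I_{RC}, the element A^{RC;u} := (d_R/|N_C|) Σ_{m∈N_C} conj(R^{jj}(m)) A^{q_i m q_i⁻¹} is a self-adjoint idempotent (a projector) in 𝒜, and it commutes with B^{c_i}. -/
/-!
For a unitary irreducible representation `ρ` of degree `d` of a finite group `H`, Schur
orthogonality shows that `f m = (d / |H|) * conj (ρ(m)_{aa})` satisfies `f ⋆ f = f` under
convolution and `conj (f m⁻¹) = f m`: `Σ f m • m` is the diagonal matrix unit `e_{aa}` of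
`ℂ[H]`, a self-adjoint idempotent. Since `m ↦ A (q m q⁻¹)` is multiplicative and sends
inverses to adjoints, it carries `e_{aa}` to a projector, which is `A^{RC;u}`. Each `q m q⁻¹`
with `m ∈ N_C` centralizes `c_i = q r q⁻¹`, so `A^h B^g = B^{hgh⁻¹} A^h` makes every summand
commute with `B^{c_i}`.
-/

open Finset

theorem Matrix.mul_single_mul_apply {n α : Type*} [Fintype n] [DecidableEq n] [CommSemiring α]
    (M M' : Matrix n n α) (a b c d : n) (x : α) :
    (M * Matrix.single b c x * M') a d = M a b * x * M' c d := by
  simp [Matrix.mul_apply, Matrix.single, ite_and]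

section Schur

variable {H : Type*} [Group H] {n : Type*} [Fintype n] [DecidableEq n]
  (ρ : H →* Matrix n n ℂ)

theorem map_inv_eq_star_of_unitary (hunit : ∀ m, ρ m * star (ρ m) = 1) (m : H) :
    ρ m⁻¹ = star (ρ m) := by
  calc ρ m⁻¹ = ρ m⁻¹ * (ρ m * star (ρ m)) := by rw [hunit, mul_one]
    _ = star (ρ m) := by rw [← mul_assoc, ← map_mul, inv_mul_cancel, map_one, one_mul]

theorem trace_map_mul_mul_map_inv (X : Matrix n n ℂ) (m : H) :
    (ρ m * X * ρ m⁻¹).trace = X.trace := by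
  rw [Matrix.trace_mul_comm, ← mul_assoc, ← map_mul, inv_mul_cancel, map_one, one_mul]

variable [Fintype H]

theorem commute_sum_conj (X : Matrix n n ℂ) (g : H) :
    ρ g * ∑ m, ρ m * X * ρ m⁻¹ = (∑ m, ρ m * X * ρ m⁻¹) * ρ g := by
  rw [mul_sum, sum_mul]
  refine Fintype.sum_equiv (Equiv.mulLeft g) _ _ fun m => ?_
  have hcancel : ρ (g * m)⁻¹ * ρ g = ρ m⁻¹ := by rw [← map_mul]; group
  rw [Equiv.coe_mulLeft, mul_assoc _ (ρ (g * m)⁻¹), hcancel, map_mul]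
  simp only [mul_assoc]

variable [Nonempty n]
  (hirr : ∀ M : Matrix n n ℂ, (∀ m, ρ m * M = M * ρ m) → ∃ z : ℂ, M = z • 1)
include hirr

theorem sum_conj_eq_smul_one (X : Matrix n n ℂ) :
    ∑ m, ρ m * X * ρ m⁻¹ = (Fintype.card H / Fintype.card n * X.trace : ℂ) • 1 := by
  obtain ⟨z, hz⟩ := hirr _ (commute_sum_conj ρ X)
  have htrace : (z • 1 : Matrix n n ℂ).trace = Fintype.card H * X.trace := by
    simp only [← hz, Matrix.trace_sum, trace_map_mul_mul_map_inv, sum_const, card_univ,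
      nsmul_eq_mul]
  rw [Matrix.trace_smul, Matrix.trace_one, smul_eq_mul] at htrace
  rw [hz, div_mul_eq_mul_div, ← htrace,
    mul_div_cancel_right₀ _ (Nat.cast_ne_zero.mpr Fintype.card_ne_zero)]

theorem sum_apply_mul_inv_apply (a b c d : n) :
    ∑ m, ρ m a b * ρ m⁻¹ c d =
      if b = c ∧ a = d then (Fintype.card H / Fintype.card n : ℂ) else 0 := by
  have h := congrFun₂ (sum_conj_eq_smul_one ρ hirr (Matrix.single b c 1)) a d
  simp only [Matrix.sum_apply, Matrix.mul_single_mul_apply, mul_one, Matrix.smul_apply,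
    Matrix.one_apply, smul_eq_mul] at h
  rw [h]
  by_cases hbc : b = c
  · subst hbc
    simp
  · simp [hbc, Matrix.trace_single_eq_of_ne _ _ _ hbc]

theorem sum_apply_mul_inv_mul_apply (g : H) (a b c d : n) :
    ∑ m, ρ m a b * ρ (m⁻¹ * g) c d =
      if b = c then (Fintype.card H / Fintype.card n : ℂ) * ρ g a d else 0 := by
  simp only [map_mul, Matrix.mul_apply, mul_sum]
  rw [sum_comm]
  simp only [← mul_assoc, ← sum_mul, sum_apply_mul_inv_apply ρ hirr]
  split_ifs with hbc <;> simp [hbc]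

end Schur

section MatrixUnit

variable {H : Type*} [Group H] [Fintype H] {n : Type*} [Fintype n] [DecidableEq n]
  (ρ : H →* Matrix n n ℂ)

noncomputable def diagMatrixUnitCoeff (a : n) (m : H) : ℂ :=
  (Fintype.card n / Fintype.card H : ℂ) * star (ρ m a a)

theorem star_diagMatrixUnitCoeff_inv (hunit : ∀ m, ρ m * star (ρ m) = 1) (a : n) (m : H) :
    star (diagMatrixUnitCoeff ρ a m⁻¹) = diagMatrixUnitCoeff ρ a m := by
  simp [diagMatrixUnitCoeff, map_inv_eq_star_of_unitary ρ hunit, Matrix.star_apply]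

theorem sum_diagMatrixUnitCoeff_mul_inv_mul [Nonempty n]
    (hirr : ∀ M : Matrix n n ℂ, (∀ m, ρ m * M = M * ρ m) → ∃ z : ℂ, M = z • 1) (a : n) (g : H) :
    ∑ m, diagMatrixUnitCoeff ρ a m * diagMatrixUnitCoeff ρ a (m⁻¹ * g) =
      diagMatrixUnitCoeff ρ a g := by
  have horth := sum_apply_mul_inv_mul_apply ρ hirr g a a a a
  rw [if_pos rfl] at horth
  calc ∑ m, diagMatrixUnitCoeff ρ a m * diagMatrixUnitCoeff ρ a (m⁻¹ * g)
      = (Fintype.card n / Fintype.card H : ℂ) ^ 2 * star (∑ m, ρ m a a * ρ (m⁻¹ * g) a a) := by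
        simp only [diagMatrixUnitCoeff, star_sum, mul_sum, star_mul']
        exact sum_congr rfl fun m _ => by ring
    _ = diagMatrixUnitCoeff ρ a g := by
        rw [horth, star_mul', star_div₀, star_natCast, star_natCast, diagMatrixUnitCoeff]
        field_simp

end MatrixUnit

section GroupSum

variable {H : Type*} [Group H] [Fintype H] {𝒜 : Type*} [Ring 𝒜] [Algebra ℂ 𝒜] {φ : H → 𝒜}

theorem sum_smul_mul_sum_smul (hmul : ∀ g h, φ g * φ h = φ (g * h)) (f f' : H → ℂ) :
    (∑ m, f m • φ m) * (∑ m, f' m • φ m) = ∑ g, (∑ m, f m * f' (m⁻¹ * g)) • φ g := by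
  simp_rw [sum_mul_sum, smul_mul_smul_comm, hmul, sum_smul]
  conv_rhs => rw [sum_comm]
  exact sum_congr rfl fun m _ => Fintype.sum_equiv (Equiv.mulLeft m) _ _ fun m' => by simp

theorem star_sum_smul [StarRing 𝒜] [StarModule ℂ 𝒜] (hstar : ∀ g, star (φ g) = φ g⁻¹)
    (f : H → ℂ) : star (∑ m, f m • φ m) = ∑ m, star (f m⁻¹) • φ m := by
  simp_rw [star_sum, star_smul, hstar]
  exact Fintype.sum_equiv (Equiv.inv H) _ _ fun m => by simp

theorem isStarProjection_sum_smul [StarRing 𝒜] [StarModule ℂ 𝒜]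
    (hmul : ∀ g h, φ g * φ h = φ (g * h)) (hstar : ∀ g, star (φ g) = φ g⁻¹) (f : H → ℂ)
    (hconv : ∀ g, ∑ m, f m * f (m⁻¹ * g) = f g) (hself : ∀ m, star (f m⁻¹) = f m) :
    IsStarProjection (∑ m, f m • φ m) where
  isIdempotentElem := by simp only [IsIdempotentElem, sum_smul_mul_sum_smul hmul, hconv]
  isSelfAdjoint := by simp only [IsSelfAdjoint, star_sum_smul hstar, hself]

end GroupSum

theorem quantum_double_ARCu_projector_general
    {G : Type*} [Group G]
    {𝒜 : Type*} [Ring 𝒜] [Algebra ℂ 𝒜] [StarRing 𝒜] [StarModule ℂ 𝒜]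
    (A B : G → 𝒜)
    (hAmul : ∀ h h' : G, A h * A h' = A (h * h'))
    (hAstar : ∀ h : G, star (A h) = A h⁻¹)
    (hAB : ∀ h g : G, A h * B g = B (h * g * h⁻¹) * A h)
    -- the conjugacy class `C = {c_1, …, c_{|C|}}`, representative `r_C`, iterators `q_i`
    (r : G) (nC : ℕ) (c : Fin nC → G) (q : Fin nC → G)
    (hq : ∀ i, c i = q i * r * (q i)⁻¹)
    -- the centralizer `N_C` of `r_C` in `G`
    (N : Subgroup G) [Fintype N] (hN : N = Subgroup.centralizer {r})
    -- an irreducible unitary matrix representation `R` of `N_C` of dimension `d_R`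
    (dR : ℕ)
    (R : N →* Matrix (Fin dR) (Fin dR) ℂ)
    (hRunitary : ∀ m, R m * star (R m) = 1)
    (hRirr : ∀ M : Matrix (Fin dR) (Fin dR) ℂ,
      (∀ m, R m * M = M * R m) → ∃ z : ℂ, M = z • (1 : Matrix (Fin dR) (Fin dR) ℂ))
    -- the element `A^{RC;u}` for `u = (i, j)`
    (i : Fin nC) (j : Fin dR) (ARCu : 𝒜)
    (hARCu : ARCu = ((dR : ℂ) / (Fintype.card N : ℂ)) •
      ∑ m : N, star (R m j j) • A (q i * (m : G) * (q i)⁻¹)) :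
    IsSelfAdjoint ARCu ∧ ARCu * ARCu = ARCu ∧ Commute ARCu (B (c i)) := by
  haveI : Nonempty (Fin dR) := ⟨j⟩
  set κ : N →* G := (MulAut.conj (q i)).toMonoidHom.comp N.subtype
  have hARCu' : ARCu = ∑ m, diagMatrixUnitCoeff R j m • A (κ m) := by
    simp only [hARCu, smul_sum, smul_smul, diagMatrixUnitCoeff, Fintype.card_fin]
    rfl
  have hproj : IsStarProjection ARCu := hARCu' ▸
    isStarProjection_sum_smul (φ := A ∘ κ) (fun g h => by simp [hAmul])
      (fun g => by simp [hAstar]) _ (sum_diagMatrixUnitCoeff_mul_inv_mul R hRirr j)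
      (star_diagMatrixUnitCoeff_inv R hRunitary j)
  have hcomm : ∀ m : N, Commute (A (κ m)) (B (c i)) := by
    intro m
    have hmr : Commute (m : G) r :=
      Subgroup.mem_centralizer_singleton_iff.mp (hN ▸ m.2 : (m : G) ∈ Subgroup.centralizer {r})
    have hκm : Commute (κ m) (c i) := by
      rw [hq]
      exact hmr.map (MulAut.conj (q i))
    rw [Commute, SemiconjBy, hAB, hκm.mul_inv_cancel]
  exact ⟨hproj.isSelfAdjoint, hproj.isIdempotentElem,
    hARCu' ▸ Commute.sum_left _ _ _ fun m _ => (hcomm m).smul_left _⟩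

/-- In a unital complex *-algebra `𝒜` carrying a realization of the quantum
double relations via elements `A^h`, `B^g` (h, g ∈ G), for every `u = (i, j) ∈ I_{RC}` the
element `A^{RC;u} = (d_R/|N_C|) Σ_{m∈N_C} conj(R^{jj}(m)) A^{q_i m q_i⁻¹}` is a self-adjoint
idempotent (a projector) commuting with `B^{c_i}`. -/
theorem quantum_double_ARCu_projector
    {G : Type*} [Group G] [Fintype G] [DecidableEq G]
    {𝒜 : Type*} [Ring 𝒜] [Algebra ℂ 𝒜] [StarRing 𝒜] [StarModule ℂ 𝒜]
    (A B : G → 𝒜)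
    (hA1 : A 1 = 1)
    (hAmul : ∀ h h' : G, A h * A h' = A (h * h'))
    (hAstar : ∀ h : G, star (A h) = A h⁻¹)
    (hBstar : ∀ g : G, star (B g) = B g)
    (hBmul : ∀ g g' : G, B g * B g' = if g = g' then B g else 0)
    (hBsum : ∑ g : G, B g = 1)
    (hAB : ∀ h g : G, A h * B g = B (h * g * h⁻¹) * A h)
    -- the conjugacy class `C = {c_1, …, c_{|C|}}`, representative `r_C`, iterators `q_i`
    (r : G) (nC : ℕ) (c : Fin nC → G) (q : Fin nC → G)
    (hcinj : Function.Injective c)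
    (hcclass : ∀ g : G, IsConj r g ↔ ∃ i, c i = g)
    (hq : ∀ i, c i = q i * r * (q i)⁻¹)
    -- the centralizer `N_C` of `r_C` in `G`
    (N : Subgroup G) [Fintype N] (hN : N = Subgroup.centralizer {r})
    -- an irreducible unitary matrix representation `R` of `N_C` of dimension `d_R`
    (dR : ℕ) (hdR : 0 < dR)
    (R : N →* Matrix (Fin dR) (Fin dR) ℂ)
    (hRunitary : ∀ m, R m * star (R m) = 1)
    (hRirr : ∀ M : Matrix (Fin dR) (Fin dR) ℂ,
      (∀ m, R m * M = M * R m) → ∃ z : ℂ, M = z • (1 : Matrix (Fin dR) (Fin dR) ℂ))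
    -- the element `A^{RC;u}` for `u = (i, j)`
    (i : Fin nC) (j : Fin dR) (ARCu : 𝒜)
    (hARCu : ARCu = ((dR : ℂ) / (Fintype.card N : ℂ)) •
      ∑ m : N, star (R m j j) • A (q i * (m : G) * (q i)⁻¹)) :
    IsSelfAdjoint ARCu ∧ ARCu * ARCu = ARCu ∧ Commute ARCu (B (c i)) :=
  quantum_double_ARCu_projector_general A B hAmul hAstar hAB r nC c q hq N hN dR R hRunitary hRirr i
    j ARCu hARCu
end

section
/- The Wigner projectors D^{RC;u} := A^{RC;u} B^{c_i} (for u = (i,j) ∈ I_{RC}) are self-adjoint and satisfy D^{RC;u₁} D^{RC;u₂} = δ_{u₁,u₂} D^{RC;u₁} for all u₁, u₂ ∈ I_{RC}; in particular they are pairwise commuting orthogonal projectors. Moreover Σ_{u∈I_{RC}} D^{RC;u} = D^{RC}, so that D^{RC} is itself a self-adjoint idempotent. -/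
/-!
For fixed `i`, `m ↦ A (q_i m q_i⁻¹)` is a unitary representation of `N_C` in `𝒜`, and `A^{RC;(i,j)}`
is the image under it of the `(j,j)` matrix-coefficient element of `R`. Averaging a matrix unit
over `N_C` and invoking irreducibility gives Schur's orthogonality relations, which make these
elements pairwise orthogonal self-adjoint idempotents. Since `N_C` centralizes `r_C`, they commute
with `B^{c_i}`, and the `B^{c_i}` are themselves orthogonal projectors, so the products `D^{RC;u}`
are orthogonal projectors. Summing the diagonal coefficients over `j` produces the character,
whence `Σ_u D^{RC;u} = D^{RC}`.
-/

open Finset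

theorem OrthogonalIdempotents.commute {R I : Type*} [Semiring R] {e : I → R}
    (he : OrthogonalIdempotents e) (i j : I) : Commute (e i) (e j) := by
  obtain rfl | h := eq_or_ne i j
  · exact Commute.refl _
  · exact (he.ortho h).trans (he.ortho h.symm).symm

theorem OrthogonalIdempotents.mul_of_commute {R ι κ : Type*} [Semiring R] {e : ι → κ → R}
    {b : ι → R} (hb : OrthogonalIdempotents b) (he : ∀ i, OrthogonalIdempotents (e i))
    (hcomm : ∀ i j, Commute (e i j) (b i)) :
    OrthogonalIdempotents fun u : ι × κ => e u.1 u.2 * b u.1 := by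
  classical
  refine OrthogonalIdempotents.iff_mul_eq.2 fun ⟨i, j⟩ ⟨i', j'⟩ => ?_
  calc e i j * b i * (e i' j' * b i') = e i j * (b i * b i') * e i' j' := by
        rw [(hcomm i' j').eq]; simp only [mul_assoc]
    _ = if (i, j) = (i', j') then e i j * b i else 0 := by
        rw [hb.mul_eq]
        obtain rfl | hi := eq_or_ne i i'
        · rw [if_pos rfl, mul_assoc, ← (hcomm i j').eq, ← mul_assoc, (he i).mul_eq]
          by_cases hj : j = j' <;> simp [hj]
        · simp [hi]

namespace QuantumDouble

section Conj

variable {G 𝒜 : Type*} [Group G] {A : G → 𝒜}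

theorem mul_conj [Mul 𝒜] (hAmul : ∀ h h', A h * A h' = A (h * h')) (q m n : G) :
    A (q * m * q⁻¹) * A (q * n * q⁻¹) = A (q * (m * n) * q⁻¹) := by
  rw [hAmul]
  group

theorem star_conj [Star 𝒜] (hAstar : ∀ h, star (A h) = A h⁻¹) (q m : G) :
    star (A (q * m * q⁻¹)) = A (q * m⁻¹ * q⁻¹) := by
  rw [hAstar]
  group

theorem commute_of_commute [Mul 𝒜] {B : G → 𝒜} (hAB : ∀ h g, A h * B g = B (h * g * h⁻¹) * A h)
    {h g : G} (hhg : Commute h g) : Commute (A h) (B g) := by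
  rw [commute_iff_eq, hAB, hhg.eq, mul_inv_cancel_right]

theorem commute_conj_of_mem_centralizer [Mul 𝒜] {B : G → 𝒜}
    (hAB : ∀ h g, A h * B g = B (h * g * h⁻¹) * A h) {r m : G}
    (hm : m ∈ Subgroup.centralizer {r}) (q : G) :
    Commute (A (q * m * q⁻¹)) (B (q * r * q⁻¹)) :=
  commute_of_commute hAB ((Commute.conj_iff q).2 (Subgroup.mem_centralizer_singleton_iff.1 hm))

end Conj

section Schur

variable {H : Type*} [Group H] {d : ℕ} (R : H →* Matrix (Fin d) (Fin d) ℂ)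

def HasScalarCommutant : Prop :=
  ∀ M : Matrix (Fin d) (Fin d) ℂ, (∀ m, R m * M = M * R m) → ∃ z : ℂ, M = z • 1

theorem star_map_eq_map_inv (hRu : ∀ m, R m * star (R m) = 1) (m : H) :
    star (R m) = R m⁻¹ :=
  calc star (R m) = R m⁻¹ * R m * star (R m) := by rw [← map_mul, inv_mul_cancel, map_one, one_mul]
    _ = R m⁻¹ := by rw [mul_assoc, hRu, mul_one]

theorem star_apply_eq_inv_apply (hRu : ∀ m, R m * star (R m) = 1) (m : H) (a b : Fin d) :
    star (R m a b) = R m⁻¹ b a := by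
  rw [← star_map_eq_map_inv R hRu, Matrix.star_apply]

variable [Fintype H]

theorem commute_sum_conj (X : Matrix (Fin d) (Fin d) ℂ) (n : H) :
    Commute (R n) (∑ m, R m * X * R m⁻¹) := by
  rw [commute_iff_eq, mul_sum, sum_mul]
  refine Fintype.sum_equiv (Equiv.mulLeft n) _ _ fun m => ?_
  simp only [Equiv.coe_mulLeft, _root_.mul_inv_rev, map_mul, mul_assoc]
  rw [← map_mul R n⁻¹, inv_mul_cancel, map_one, mul_one]

theorem sum_conj_eq_smul_one (hd : 0 < d) (hirr : HasScalarCommutant R)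
    (X : Matrix (Fin d) (Fin d) ℂ) :
    ∑ m, R m * X * R m⁻¹ = (Fintype.card H * Matrix.trace X / d : ℂ) • 1 := by
  obtain ⟨z, hz⟩ := hirr _ (commute_sum_conj R X)
  have htrace : Matrix.trace (∑ m, R m * X * R m⁻¹) = Fintype.card H * Matrix.trace X := by
    simp [Matrix.trace_sum, Matrix.trace_mul_cycle (R _) X, ← map_mul]
  rw [hz, Matrix.trace_smul, Matrix.trace_one, Fintype.card_fin, smul_eq_mul] at htrace
  rw [hz, ← htrace, mul_div_cancel_right₀ _ (Nat.cast_ne_zero.mpr hd.ne')]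

theorem sum_apply_mul_inv_apply (hd : 0 < d) (hirr : HasScalarCommutant R) (i a b k : Fin d) :
    ∑ m, R m i a * R m⁻¹ b k = if a = b ∧ i = k then (Fintype.card H / d : ℂ) else 0 := by
  have h := congrFun₂ (sum_conj_eq_smul_one R hd hirr (Matrix.single a b 1)) i k
  simp only [Matrix.sum_apply, Matrix.mul_apply, Matrix.single_apply, ite_and, mul_ite, mul_one,
    mul_zero, sum_ite_eq, mem_univ, ↓reduceIte, ite_mul, zero_mul, Matrix.trace, Matrix.diag_apply,
    Matrix.smul_apply, Matrix.one_apply, smul_eq_mul] at h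
  rw [h]
  by_cases hab : a = b <;> simp [hab, eq_comm]

end Schur

section Projector

variable {H : Type*} [Group H] [Fintype H] {𝒜 : Type*} [Semiring 𝒜] [Algebra ℂ 𝒜]

theorem sum_smul_mul_sum_smul (ρ : H → 𝒜) (hρ : ∀ m n, ρ m * ρ n = ρ (m * n)) (f g : H → ℂ) :
    (∑ m, f m • ρ m) * ∑ n, g n • ρ n = ∑ n, (∑ m, f m * g (m⁻¹ * n)) • ρ n := by
  simp_rw [sum_mul_sum, smul_mul_smul_comm, hρ, sum_smul]
  conv_rhs => rw [sum_comm]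
  refine sum_congr rfl fun m _ => ?_
  exact Fintype.sum_equiv (Equiv.mulLeft m) _ _ fun n => by simp

variable {d : ℕ} (R : H →* Matrix (Fin d) (Fin d) ℂ)

/-- With `ρ m = A (q_i m q_i⁻¹)` this is the paper's `A^{RC;(i,j)}`. -/
noncomputable def coeffProjector (ρ : H → 𝒜) (j : Fin d) : 𝒜 :=
  ((d : ℂ) / Fintype.card H) • ∑ m, star (R m j j) • ρ m

theorem sum_coeffProjector (ρ : H → 𝒜) :
    ∑ j, coeffProjector R ρ j =
      ((d : ℂ) / Fintype.card H) • ∑ m, star (Matrix.trace (R m)) • ρ m := by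
  simp only [coeffProjector, ← smul_sum, Matrix.trace, Matrix.diag, star_sum, sum_smul]
  rw [sum_comm]

theorem coeffProjector_commute {ρ : H → 𝒜} {b : 𝒜} (h : ∀ m, Commute (ρ m) b) (j : Fin d) :
    Commute (coeffProjector R ρ j) b :=
  (Commute.sum_left _ _ _ fun m _ => (h m).smul_left _).smul_left _

theorem coeffProjector_eq_inv (hRu : ∀ m, R m * star (R m) = 1) (ρ : H → 𝒜) (j : Fin d) :
    coeffProjector R ρ j = ((d : ℂ) / Fintype.card H) • ∑ m, R m⁻¹ j j • ρ m := by
  simp only [coeffProjector, star_apply_eq_inv_apply R hRu]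

theorem star_coeffProjector [StarRing 𝒜] [StarModule ℂ 𝒜] (hRu : ∀ m, R m * star (R m) = 1)
    (ρ : H → 𝒜)    (hρ : ∀ m, star (ρ m) = ρ m⁻¹) (j : Fin d) :
    star (coeffProjector R ρ j) = coeffProjector R ρ j := by
  rw [coeffProjector_eq_inv R hRu]
  simp only [star_smul, star_sum, hρ, star_apply_eq_inv_apply R hRu, inv_inv]
  congr 1
  · simp
  · exact Fintype.sum_equiv (Equiv.inv H) _ _ fun m => by simp

theorem coeffProjector_mul (hRu : ∀ m, R m * star (R m) = 1) (hd : 0 < d)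
    (hirr : HasScalarCommutant R) (ρ : H → 𝒜) (hρ : ∀ m n, ρ m * ρ n = ρ (m * n)) (j j' : Fin d) :
    coeffProjector R ρ j * coeffProjector R ρ j' = if j = j' then coeffProjector R ρ j else 0 := by
  have hconv : ∀ n, ∑ m, R m⁻¹ j j * R (m⁻¹ * n)⁻¹ j' j' =
      if j = j' then (Fintype.card H / d : ℂ) * R n⁻¹ j j else 0 := by
    intro n
    calc ∑ m, R m⁻¹ j j * R (m⁻¹ * n)⁻¹ j' j'
        = ∑ k, R n⁻¹ j' k * ∑ m, R m k j' * R m⁻¹ j j := by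
          simp only [_root_.mul_inv_rev, inv_inv, map_mul, Matrix.mul_apply, mul_sum]
          rw [sum_comm]
          exact sum_congr rfl fun k _ => sum_congr rfl fun m _ => by ring
      _ = if j = j' then (Fintype.card H / d : ℂ) * R n⁻¹ j j else 0 := by
          simp only [sum_apply_mul_inv_apply R hd hirr]
          by_cases h : j = j' <;> simp [h, eq_comm, mul_comm]
  rw [coeffProjector_eq_inv R hRu, coeffProjector_eq_inv R hRu, smul_mul_smul_comm,
    sum_smul_mul_sum_smul ρ hρ]
  simp only [hconv]
  split_ifs with h
  · have hd' : (d : ℂ) ≠ 0 := Nat.cast_ne_zero.mpr hd.ne'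
    have hH : (Fintype.card H : ℂ) ≠ 0 := Nat.cast_ne_zero.mpr Fintype.card_ne_zero
    simp_rw [← smul_smul (Fintype.card H / d : ℂ), ← smul_sum, smul_smul]
    congr 1
    field_simp
  · simp

end Projector

end QuantumDouble

theorem quantum_double_Wigner_projectors_decomposition_general
    {G : Type*} [Group G] [DecidableEq G]
    {𝒜 : Type*} [Ring 𝒜] [Algebra ℂ 𝒜] [StarRing 𝒜] [StarModule ℂ 𝒜]
    (A B : G → 𝒜)
    (hAmul : ∀ h h' : G, A h * A h' = A (h * h'))
    (hAstar : ∀ h : G, star (A h) = A h⁻¹)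
    (hBstar : ∀ g : G, star (B g) = B g)
    (hBmul : ∀ g g' : G, B g * B g' = if g = g' then B g else 0)
    (hAB : ∀ h g : G, A h * B g = B (h * g * h⁻¹) * A h)
    -- the conjugacy class `C = {c_1, …, c_{|C|}}`, representative `r_C`, iterators `q_i`
    (r : G) (nC : ℕ) (c : Fin nC → G) (q : Fin nC → G)
    (hcinj : Function.Injective c)
    (hq : ∀ i, c i = q i * r * (q i)⁻¹)
    -- the centralizer `N_C` of `r_C` in `G`
    (N : Subgroup G) [Fintype N] (hN : N = Subgroup.centralizer {r})
    -- an irreducible unitary matrix representation `R` of `N_C` of dimension `d_R`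
    (dR : ℕ) (hdR : 0 < dR)
    (R : N →* Matrix (Fin dR) (Fin dR) ℂ)
    (hRunitary : ∀ m, R m * star (R m) = 1)
    (hRirr : ∀ M : Matrix (Fin dR) (Fin dR) ℂ,
      (∀ m, R m * M = M * R m) → ∃ z : ℂ, M = z • (1 : Matrix (Fin dR) (Fin dR) ℂ))
    -- the Wigner projectors `D^{RC;u} = A^{RC;u} B^{c_i}` for `u = (i,j) ∈ I_{RC}`
    (D : Fin nC × Fin dR → 𝒜)
    (hD : ∀ u : Fin nC × Fin dR, D u =
      (((dR : ℂ) / (Fintype.card N : ℂ)) •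
        ∑ m : N, star (R m u.2 u.2) • A (q u.1 * (m : G) * (q u.1)⁻¹)) * B (c u.1))
    -- the full Wigner projector `D^{RC}`, defined with the character `χ_R = trace ∘ R`
    (DRC : 𝒜)
    (hDRC : DRC = ((dR : ℂ) / (Fintype.card N : ℂ)) •
      ∑ m : N, star (Matrix.trace (R m)) •
        ∑ i : Fin nC, A (q i * (m : G) * (q i)⁻¹) * B (c i)) :
    (∀ u, star (D u) = D u) ∧
    (∀ u₁ u₂, D u₁ * D u₂ = if u₁ = u₂ then D u₁ else 0) ∧
    (∀ u₁ u₂, Commute (D u₁) (D u₂)) ∧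
    (∑ u : Fin nC × Fin dR, D u = DRC) ∧
    star DRC = DRC ∧ DRC * DRC = DRC := by
  let e : Fin nC → Fin dR → 𝒜 := fun i =>
    QuantumDouble.coeffProjector R fun m : N => A (q i * m * (q i)⁻¹)
  have hDe : ∀ u, D u = e u.1 u.2 * B (c u.1) := hD
  have hcomm : ∀ i j, Commute (e i j) (B (c i)) := fun i j =>
    QuantumDouble.coeffProjector_commute R (fun m => hq i ▸
      QuantumDouble.commute_conj_of_mem_centralizer hAB (hN ▸ m.2) (q i)) j
  have hB : OrthogonalIdempotents (B ∘ c) :=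
    OrthogonalIdempotents.iff_mul_eq.2 fun i i' => by simp [hBmul, hcinj.eq_iff]
  have he : ∀ i, OrthogonalIdempotents (e i) := fun i => OrthogonalIdempotents.iff_mul_eq.2
    (QuantumDouble.coeffProjector_mul R hRunitary hdR hRirr _
      fun m n => QuantumDouble.mul_conj hAmul (q i) m n)
  have hDorth : OrthogonalIdempotents D := by
    convert hB.mul_of_commute he hcomm
    exact hDe _
  have hDsa : ∀ u, IsSelfAdjoint (D u) := fun u => by
    rw [hDe]
    exact (IsSelfAdjoint.commute_iff
      (QuantumDouble.star_coeffProjector R hRunitary _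
        (fun m => QuantumDouble.star_conj hAstar (q u.1) m) u.2) (hBstar _)).1 (hcomm _ _)
  have hsum : ∑ u, D u = DRC := by
    rw [hDRC, Fintype.sum_prod_type]
    simp_rw [hDe, ← sum_mul, e, QuantumDouble.sum_coeffProjector, smul_mul_assoc, sum_mul,
      smul_mul_assoc, smul_sum]
    rw [sum_comm]
  refine ⟨hDsa, hDorth.mul_eq, hDorth.commute, hsum, ?_, ?_⟩
  · rw [← hsum]
    exact isSelfAdjoint_sum _ fun u _ => hDsa u
  · rw [← hsum]
    exact hDorth.isIdempotentElem_sum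

/-- The Wigner projectors `D^{RC;u} = A^{RC;u} B^{c_i}` (for `u = (i,j)`)
are self-adjoint, satisfy `D^{RC;u₁} D^{RC;u₂} = δ_{u₁,u₂} D^{RC;u₁}` (so they are pairwise
commuting orthogonal projectors), and sum to `D^{RC}`, which is itself a self-adjoint
idempotent. -/
theorem quantum_double_Wigner_projectors_decomposition
    {G : Type*} [Group G] [Fintype G] [DecidableEq G]
    {𝒜 : Type*} [Ring 𝒜] [Algebra ℂ 𝒜] [StarRing 𝒜] [StarModule ℂ 𝒜]
    (A B : G → 𝒜)
    (hA1 : A 1 = 1)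
    (hAmul : ∀ h h' : G, A h * A h' = A (h * h'))
    (hAstar : ∀ h : G, star (A h) = A h⁻¹)
    (hBstar : ∀ g : G, star (B g) = B g)
    (hBmul : ∀ g g' : G, B g * B g' = if g = g' then B g else 0)
    (hBsum : ∑ g : G, B g = 1)
    (hAB : ∀ h g : G, A h * B g = B (h * g * h⁻¹) * A h)
    -- the conjugacy class `C = {c_1, …, c_{|C|}}`, representative `r_C`, iterators `q_i`
    (r : G) (nC : ℕ) (c : Fin nC → G) (q : Fin nC → G)
    (hcinj : Function.Injective c)
    (hcclass : ∀ g : G, IsConj r g ↔ ∃ i, c i = g)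
    (hq : ∀ i, c i = q i * r * (q i)⁻¹)
    -- the centralizer `N_C` of `r_C` in `G`
    (N : Subgroup G) [Fintype N] (hN : N = Subgroup.centralizer {r})
    -- an irreducible unitary matrix representation `R` of `N_C` of dimension `d_R`
    (dR : ℕ) (hdR : 0 < dR)
    (R : N →* Matrix (Fin dR) (Fin dR) ℂ)
    (hRunitary : ∀ m, R m * star (R m) = 1)
    (hRirr : ∀ M : Matrix (Fin dR) (Fin dR) ℂ,
      (∀ m, R m * M = M * R m) → ∃ z : ℂ, M = z • (1 : Matrix (Fin dR) (Fin dR) ℂ))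
    -- the Wigner projectors `D^{RC;u} = A^{RC;u} B^{c_i}` for `u = (i,j) ∈ I_{RC}`
    (D : Fin nC × Fin dR → 𝒜)
    (hD : ∀ u : Fin nC × Fin dR, D u =
      (((dR : ℂ) / (Fintype.card N : ℂ)) •
        ∑ m : N, star (R m u.2 u.2) • A (q u.1 * (m : G) * (q u.1)⁻¹)) * B (c u.1))
    -- the full Wigner projector `D^{RC}`, defined with the character `χ_R = trace ∘ R`
    (DRC : 𝒜)
    (hDRC : DRC = ((dR : ℂ) / (Fintype.card N : ℂ)) •
      ∑ m : N, star (Matrix.trace (R m)) •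
        ∑ i : Fin nC, A (q i * (m : G) * (q i)⁻¹) * B (c i)) :
    (∀ u, star (D u) = D u) ∧
    (∀ u₁ u₂, D u₁ * D u₂ = if u₁ = u₂ then D u₁ else 0) ∧
    (∀ u₁ u₂, Commute (D u₁) (D u₂)) ∧
    (∑ u : Fin nC × Fin dR, D u = DRC) ∧
    star DRC = DRC ∧ DRC * DRC = DRC :=
  quantum_double_Wigner_projectors_decomposition_general A B hAmul hAstar hBstar hBmul hAB r nC c q
    hcinj hq N hN dR hdR R hRunitary hRirr D hD DRC hDRC
end

section
/- For all u₁, u₂ ∈ I_{RC}: Σ_{v∈I_{RC}} (F^{RC;u₁v})* F^{RC;u₂v} = δ_{u₁,u₂} (d_R/|N_C|)² · 1 and Σ_{v∈I_{RC}} F^{RC;u₁v} (F^{RC;u₂v})* = δ_{u₁,u₂} (d_R/|N_C|)² · 1. -/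
/-- For the representation-basis ribbon operators
`F^{RC;uv} = (d_R/|N_C|) Σ_{m∈N_C} conj(R^{jj'}(m)) F^{c_i⁻¹, q_i m q_{i'}⁻¹}` on a positive
finite ribbon, one has for all `u₁, u₂ ∈ I_{RC}`:
`Σ_v (F^{RC;u₁v})* F^{RC;u₂v} = δ_{u₁,u₂} (d_R/|N_C|)² 1` and
`Σ_v F^{RC;u₁v} (F^{RC;u₂v})* = δ_{u₁,u₂} (d_R/|N_C|)² 1`. -/
theorem quantum_double_FRC_FdaggerF_identity
    {G : Type*} [Group G] [Fintype G] [DecidableEq G]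
    {𝒜 : Type*} [Ring 𝒜] [Algebra ℂ 𝒜] [StarRing 𝒜] [StarModule ℂ 𝒜]
    -- Kitaev ribbon operators on a positive finite ribbon
    (F : G → G → 𝒜)
    (hFmul : ∀ h g h' g' : G, F h g * F h' g' = if g = g' then F (h' * h) g else 0)
    (hFstar : ∀ h g : G, star (F h g) = F h⁻¹ g)
    (hFsum : ∑ g : G, F 1 g = 1)
    -- the conjugacy class `C = {c_1, …, c_{|C|}}`, representative `r_C`, iterators `q_i`
    (r : G) (nC : ℕ) (c : Fin nC → G) (q : Fin nC → G)
    (hcinj : Function.Injective c)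
    (hcclass : ∀ g : G, IsConj r g ↔ ∃ i, c i = g)
    (hq : ∀ i, c i = q i * r * (q i)⁻¹)
    -- the centralizer `N_C` of `r_C` in `G`
    (N : Subgroup G) [Fintype N] (hN : N = Subgroup.centralizer {r})
    -- an irreducible unitary matrix representation `R` of `N_C` of dimension `d_R`
    (dR : ℕ) (hdR : 0 < dR)
    (R : N →* Matrix (Fin dR) (Fin dR) ℂ)
    (hRunitary : ∀ m, R m * star (R m) = 1)
    (hRirr : ∀ M : Matrix (Fin dR) (Fin dR) ℂ,
      (∀ m, R m * M = M * R m) → ∃ z : ℂ, M = z • (1 : Matrix (Fin dR) (Fin dR) ℂ))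
    -- the ribbon operators in the representation basis
    (FRC : Fin nC × Fin dR → Fin nC × Fin dR → 𝒜)
    (hFRC : ∀ u v : Fin nC × Fin dR, FRC u v =
      ((dR : ℂ) / (Fintype.card N : ℂ)) •
        ∑ m : N, star (R m u.2 v.2) • F (c u.1)⁻¹ (q u.1 * (m : G) * (q v.1)⁻¹)) :
    ∀ u₁ u₂ : Fin nC × Fin dR,
      (∑ v : Fin nC × Fin dR, star (FRC u₁ v) * FRC u₂ v =
        if u₁ = u₂ then ((dR : ℂ) / (Fintype.card N : ℂ)) ^ 2 • (1 : 𝒜) else 0) ∧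
      (∑ v : Fin nC × Fin dR, FRC u₁ v * star (FRC u₂ v) =
        if u₁ = u₂ then ((dR : ℂ) / (Fintype.card N : ℂ)) ^ 2 • (1 : 𝒜) else 0) := by
  classical
  intro u₁ u₂
  obtain ⟨i₁, j₁⟩ := u₁
  obtain ⟨i₂, j₂⟩ := u₂
  set κ : ℂ := (dR : ℂ) / (Fintype.card N : ℂ) with hκ
  have hNmem : ∀ m : G, m ∈ N ↔ r * m = m * r := by
    intro m
    rw [hN, Subgroup.mem_centralizer_iff]
    constructor
    · intro h; exact h r rfl
    · intro h g hg; rw [Set.mem_singleton_iff] at hg; subst hg; exact h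
  have key : ∀ x : G, ∃! p : Fin nC × N, q p.1 * ((p.2 : G)) = x := by
    intro x
    obtain ⟨i, hi⟩ := (hcclass (x * r * x⁻¹)).1 (isConj_iff.2 ⟨x, rfl⟩)
    have hmm : (q i)⁻¹ * x ∈ N := by
      rw [hNmem]
      have h1 : q i * r * (q i)⁻¹ = x * r * x⁻¹ := by rw [← hq i, hi]
      have h2 := congrArg (fun y => (q i)⁻¹ * (y * x)) h1
      simpa [mul_assoc] using h2
    refine ⟨(i, ⟨(q i)⁻¹ * x, hmm⟩), by simp, ?_⟩
    rintro ⟨i', m⟩ h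
    simp only at h
    have hmr : r * (m : G) = (m : G) * r := (hNmem m).1 m.2
    have hm2 : (m : G) * r * ((m : G))⁻¹ = r := by
      rw [← hmr]; simp [mul_assoc]
    have hci' : c i' = x * r * x⁻¹ := by
      rw [hq i', ← h, mul_inv_rev]
      calc q i' * r * (q i')⁻¹
          = q i' * ((m : G) * r * (m : G)⁻¹) * (q i')⁻¹ := by rw [hm2]
        _ = q i' * (m : G) * r * ((m : G)⁻¹ * (q i')⁻¹) := by
            simp [mul_assoc]
    have hii : i' = i := hcinj (by rw [hci', hi])
    subst hii
    have hmx : (m : G) = (q i')⁻¹ * x := by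
      rw [← h]; simp [mul_assoc]
    exact Prod.ext rfl (Subtype.ext hmx)
  have hbij : Function.Bijective (fun p : Fin nC × N => q p.1 * (p.2 : G)) :=
    (Function.bijective_iff_existsUnique _).mpr key
  have hsep : ∀ (ia ib i' : Fin nC) (m n : N),
      (q ia * (m : G) * (q i')⁻¹ = q ib * (n : G) * (q i')⁻¹) ↔ (ia = ib ∧ m = n) := by
    intro ia ib i' m n
    constructor
    · intro he
      have he2 : q ia * (m : G) = q ib * (n : G) := by
        have h3 := congrArg (fun y => y * q i') he
        simpa [mul_assoc] using h3
      have h4 := hbij.injective (a₁ := (ia, m)) (a₂ := (ib, n)) he2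
      simpa [Prod.ext_iff] using h4
    · rintro ⟨rfl, rfl⟩; rfl
  have hsum1 : ∀ ia : Fin nC,
      (∑ i' : Fin nC, ∑ m : N, F 1 (q ia * (m : G) * (q i')⁻¹)) = 1 := by
    intro ia
    have hbij2 : Function.Bijective
        (fun p : Fin nC × N => q ia * ((p.2 : G)) * (q p.1)⁻¹) := by
      constructor
      · rintro ⟨i, m⟩ ⟨i', m'⟩ h
        simp only at h
        have h2 : q i * ((m⁻¹ : N) : G) = q i' * ((m'⁻¹ : N) : G) := by
          have h3 := congrArg (fun y => ((q ia)⁻¹ * y)⁻¹) h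
          simpa [mul_inv_rev, mul_assoc] using h3
        have h4 := hbij.injective (a₁ := (i, m⁻¹)) (a₂ := (i', m'⁻¹)) h2
        simp only [Prod.ext_iff] at h4 ⊢
        exact ⟨h4.1, inv_injective h4.2⟩
      · intro g
        obtain ⟨⟨i, m⟩, hp⟩ := hbij.surjective (g⁻¹ * q ia)
        simp only at hp
        refine ⟨(i, m⁻¹), ?_⟩
        have hginv : g⁻¹ = q i * (m : G) * (q ia)⁻¹ := by
          rw [hp]; simp [mul_assoc]
        simp only
        rw [← inv_inv g, hginv]
        simp [mul_inv_rev, mul_assoc]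
    rw [← Fintype.sum_prod_type']
    exact (Fintype.sum_bijective _ hbij2 _ _ (fun p => rfl)).trans hFsum
  have hRorth : ∀ (m : N) (a b : Fin dR),
      (∑ j' : Fin dR, R m a j' * star (R m b j')) = if a = b then 1 else 0 := by
    intro m a b
    have h : (R m * star (R m)) a b = (1 : Matrix (Fin dR) (Fin dR) ℂ) a b := by
      rw [hRunitary m]
    simpa [Matrix.mul_apply, Matrix.star_apply, Matrix.one_apply] using h
  have hRorth' : ∀ (m : N) (a b : Fin dR),
      (∑ j' : Fin dR, star (R m a j') * R m b j') = if a = b then 1 else 0 := by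
    intro m a b
    have h := congrArg star (hRorth m a b)
    simpa [star_sum, star_mul', apply_ite (star : ℂ → ℂ)] using h
  have hκs : star κ = κ := by
    simp [hκ]
  have hstar : ∀ (a : Fin nC) (b : Fin dR) (i' : Fin nC) (j' : Fin dR),
      star (FRC (a, b) (i', j')) =
        κ • ∑ m : N, (R m b j') • F (c a) (q a * (m : G) * (q i')⁻¹) := by
    intro a b i' j'
    rw [hFRC]
    rw [star_smul, star_sum, hκs]
    congr 1
    refine Finset.sum_congr rfl fun m _ => ?_
    rw [star_smul, star_star, hFstar, inv_inv]
  have master : ∀ (h₁ h₂ : G) (ia ib : Fin nC) (α β : N → Fin dR → ℂ) (δc : ℂ),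
      (ia = ib → h₂ * h₁ = 1) →
      (∀ m : N, (∑ j' : Fin dR, α m j' * β m j') = δc) →
      (∑ i' : Fin nC, ∑ j' : Fin dR, ∑ m : N, ∑ n : N,
        (α m j' * β n j') •
          (F h₁ (q ia * (m : G) * (q i')⁻¹) * F h₂ (q ib * (n : G) * (q i')⁻¹)))
      = if ia = ib then δc • (1 : 𝒜) else 0 := by
    intro h₁ h₂ ia ib α β δc hh hco
    have hFF : ∀ (i' : Fin nC) (m n : N),
        F h₁ (q ia * (m : G) * (q i')⁻¹) * F h₂ (q ib * (n : G) * (q i')⁻¹) =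
        if ia = ib ∧ m = n then F 1 (q ia * (m : G) * (q i')⁻¹) else 0 := by
      intro i' m n
      rw [hFmul]
      by_cases hcnd : ia = ib ∧ m = n
      · have hg : q ia * (m : G) * (q i')⁻¹ = q ib * (n : G) * (q i')⁻¹ :=
          (hsep _ _ _ _ _).2 hcnd
        rw [if_pos hg, if_pos hcnd, hh hcnd.1]
      · rw [if_neg hcnd, if_neg]
        intro hg
        exact hcnd ((hsep _ _ _ _ _).1 hg)
    by_cases h12 : ia = ib
    · subst h12
      simp only [hFF, true_and, smul_ite, smul_zero, Finset.sum_ite_eq,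
        Finset.mem_univ, if_true, if_pos rfl]
      have swap : ∀ i' : Fin nC,
          (∑ j' : Fin dR, ∑ m : N,
            (α m j' * β m j') • F 1 (q ia * (m : G) * (q i')⁻¹)) =
          ∑ m : N, δc • F 1 (q ia * (m : G) * (q i')⁻¹) := by
        intro i'
        rw [Finset.sum_comm]
        refine Finset.sum_congr rfl fun m _ => ?_
        rw [← Finset.sum_smul, hco m]
      simp only [swap, ← Finset.smul_sum]
      rw [hsum1 ia]
    · simp [hFF, h12]
  have hterm1 : ∀ (i' : Fin nC) (j' : Fin dR),
      star (FRC (i₁, j₁) (i', j')) * FRC (i₂, j₂) (i', j') =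
      (κ * κ) • ∑ m : N, ∑ n : N, (R m j₁ j' * star (R n j₂ j')) •
        (F (c i₁) (q i₁ * (m : G) * (q i')⁻¹) * F (c i₂)⁻¹ (q i₂ * (n : G) * (q i')⁻¹)) := by
    intro i' j'
    rw [hstar i₁ j₁ i' j', hFRC]
    rw [smul_mul_smul_comm]
    congr 1
    rw [Finset.sum_mul_sum]
    refine Finset.sum_congr rfl fun m _ => Finset.sum_congr rfl fun n _ => ?_
    rw [smul_mul_smul_comm]
  have hterm2 : ∀ (i' : Fin nC) (j' : Fin dR),
      FRC (i₁, j₁) (i', j') * star (FRC (i₂, j₂) (i', j')) =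
      (κ * κ) • ∑ m : N, ∑ n : N, (star (R m j₁ j') * R n j₂ j') •
        (F (c i₁)⁻¹ (q i₁ * (m : G) * (q i')⁻¹) * F (c i₂) (q i₂ * (n : G) * (q i')⁻¹)) := by
    intro i' j'
    rw [hFRC, hstar i₂ j₂ i' j']
    rw [smul_mul_smul_comm]
    congr 1
    rw [Finset.sum_mul_sum]
    refine Finset.sum_congr rfl fun m _ => Finset.sum_congr rfl fun n _ => ?_
    rw [smul_mul_smul_comm]
  constructor
  · rw [Fintype.sum_prod_type]
    have e1 : (∑ i' : Fin nC, ∑ j' : Fin dR,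
        star (FRC (i₁, j₁) (i', j')) * FRC (i₂, j₂) (i', j')) =
        (κ * κ) • ∑ i' : Fin nC, ∑ j' : Fin dR, ∑ m : N, ∑ n : N,
          (R m j₁ j' * star (R n j₂ j')) •
          (F (c i₁) (q i₁ * (m : G) * (q i')⁻¹) * F (c i₂)⁻¹ (q i₂ * (n : G) * (q i')⁻¹)) := by
      simp only [hterm1, ← Finset.smul_sum]
    rw [e1]
    have e2 := master (c i₁) ((c i₂)⁻¹) i₁ i₂
      (fun m j' => R m j₁ j') (fun n j' => star (R n j₂ j'))
      (if j₁ = j₂ then (1 : ℂ) else 0)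
      (fun h => by rw [h, inv_mul_cancel])
      (fun m => hRorth m j₁ j₂)
    rw [e2]
    by_cases h1 : i₁ = i₂ <;> by_cases h2 : j₁ = j₂ <;>
      simp [h1, h2, Prod.ext_iff, sq, smul_smul]
  · rw [Fintype.sum_prod_type]
    have e1 : (∑ i' : Fin nC, ∑ j' : Fin dR,
        FRC (i₁, j₁) (i', j') * star (FRC (i₂, j₂) (i', j'))) =
        (κ * κ) • ∑ i' : Fin nC, ∑ j' : Fin dR, ∑ m : N, ∑ n : N,
          (star (R m j₁ j') * R n j₂ j') •
          (F (c i₁)⁻¹ (q i₁ * (m : G) * (q i')⁻¹) * F (c i₂) (q i₂ * (n : G) * (q i')⁻¹)) := by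
      simp only [hterm2, ← Finset.smul_sum]
    rw [e1]
    have e2 := master ((c i₁)⁻¹) (c i₂) i₁ i₂
      (fun m j' => star (R m j₁ j')) (fun n j' => R n j₂ j')
      (if j₁ = j₂ then (1 : ℂ) else 0)
      (fun h => by rw [h, mul_inv_cancel])
      (fun m => hRorth' m j₁ j₂)
    rw [e2]
    by_cases h1 : i₁ = i₂ <;> by_cases h2 : j₁ = j₂ <;>
      simp [h1, h2, Prod.ext_iff, sq, smul_smul]
end

section
/- For all u, w ∈ I_{RC}: F^{RC;uw} = (|N_C|/d_R) Σ_{v∈I_{RC}} F₁^{RC;uv} F₂^{RC;vw}. -/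
/-!
Writing `k = q_u p q_i⁻¹` with `i` indexing `C` and `p ∈ N_C` parametrizes `G` bijectively and
turns `k⁻¹ c_u⁻¹ k` into `c_i⁻¹`, so the concatenation sum becomes, for each `i`, a convolution
over `N_C`. Since `R` is multiplicative, the matrix-coefficient transform
`A ↦ Σ_m conj (R(m)_{ab}) A(m)` takes convolutions over `N_C` to matrix products, and the
prefactors combine as `(|N_C|/d_R) (d_R/|N_C|)² = d_R/|N_C|`.
-/

open Finset

section CoeffTransform

variable {H : Type*} [Group H] [Fintype H] {n : Type*} [Fintype n] [DecidableEq n]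
  {𝒜 : Type*} [Ring 𝒜] [Algebra ℂ 𝒜]

noncomputable def coeffTransform (R : H →* Matrix n n ℂ) (a b : n) (A : H → 𝒜) : 𝒜 :=
  ∑ m, star (R m a b) • A m

theorem coeffTransform_convolution (R : H →* Matrix n n ℂ) (a b : n) (A B : H → 𝒜) :
    coeffTransform R a b (fun m => ∑ p, A p * B (p⁻¹ * m)) =
      ∑ j, coeffTransform R a j A * coeffTransform R j b B := by
  have star_coeff_mul : ∀ p m : H,
      star (R (p * m) a b) = ∑ j, star (R p a j) * star (R m j b) := fun p m => by
    simp only [map_mul, Matrix.mul_apply, star_sum, star_mul']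
  calc coeffTransform R a b (fun m => ∑ p, A p * B (p⁻¹ * m))
      = ∑ p, ∑ m, star (R (p * m) a b) • (A p * B m) := by
        simp only [coeffTransform, smul_sum]
        rw [sum_comm]
        refine sum_congr rfl fun p _ => ?_
        exact Fintype.sum_equiv (Equiv.mulLeft p⁻¹) _ _ fun m => by simp
    _ = ∑ j, ∑ p, ∑ m, (star (R p a j) • A p) * (star (R m j b) • B m) := by
        simp only [star_coeff_mul, sum_smul, smul_mul_smul_comm]
        exact (sum_congr rfl fun p _ => sum_comm).trans sum_comm
    _ = ∑ j, coeffTransform R a j A * coeffTransform R j b B := by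
        simp only [coeffTransform, sum_mul_sum]

end CoeffTransform

section Transversal

variable {G : Type*} [Group G] {r : G} {ι : Type*} {c q : ι → G}

theorem conj_mul_mul_inv_of_mem_centralizer {p : G} (hp : p ∈ Subgroup.centralizer {r})
    (a b : G) : (a * p * b⁻¹)⁻¹ * (a * r * a⁻¹) * (a * p * b⁻¹) = b * r * b⁻¹ := by
  calc (a * p * b⁻¹)⁻¹ * (a * r * a⁻¹) * (a * p * b⁻¹) = b * (p⁻¹ * (r * p)) * b⁻¹ := by group
    _ = b * r * b⁻¹ := by rw [← Subgroup.mem_centralizer_singleton_iff.mp hp, inv_mul_cancel_left]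

theorem bijective_mul_centralizer_mul_inv
    (hcinj : Function.Injective c) (hcclass : ∀ g : G, IsConj r g → ∃ i, c i = g)
    (hq : ∀ i, c i = q i * r * (q i)⁻¹) (a : G) :
    Function.Bijective fun x : ι × Subgroup.centralizer {r} => a * x.2 * (q x.1)⁻¹ := by
  constructor
  · rintro ⟨i, p⟩ ⟨i', p'⟩ h
    have hi : i = i' := hcinj <| by
      rw [hq, hq, ← conj_mul_mul_inv_of_mem_centralizer p.2 a (q i),
        ← conj_mul_mul_inv_of_mem_centralizer p'.2 a (q i')]
      simp only at h
      rw [h]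
    subst hi
    exact Prod.ext rfl (Subtype.ext (mul_left_cancel (mul_right_cancel h)))
  · intro k
    obtain ⟨i, hi⟩ := hcclass (k⁻¹ * (a * r * a⁻¹) * k) (isConj_iff.mpr ⟨k⁻¹ * a, by group⟩)
    have hmem : a⁻¹ * k * q i ∈ Subgroup.centralizer {r} := by
      refine Subgroup.mem_centralizer_singleton_iff.mpr ?_
      rw [hq] at hi
      calc a⁻¹ * k * q i * r = a⁻¹ * k * (q i * r * (q i)⁻¹) * q i := by group
        _ = r * (a⁻¹ * k * q i) := by rw [hi]; group
    exact ⟨⟨i, ⟨_, hmem⟩⟩, by group⟩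

theorem sum_concat_eq_sum_centralizer [Fintype G] [Fintype ι]
    [Fintype (Subgroup.centralizer {r})] {𝒜 : Type*} [NonUnitalNonAssocSemiring 𝒜]
    (hcinj : Function.Injective c) (hcclass : ∀ g : G, IsConj r g → ∃ i, c i = g)
    (hq : ∀ i, c i = q i * r * (q i)⁻¹) (F₁ F₂ : G → G → 𝒜) (i₀ : ι) (m h : G) :
    ∑ k, F₁ (c i₀)⁻¹ k * F₂ (k⁻¹ * (c i₀)⁻¹ * k) (k⁻¹ * (q i₀ * m * h)) =
      ∑ i, ∑ p : Subgroup.centralizer {r},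
        F₁ (c i₀)⁻¹ (q i₀ * p * (q i)⁻¹) * F₂ (c i)⁻¹ (q i * ((p : G)⁻¹ * m) * h) := by
  rw [← Fintype.sum_prod_type']
  refine (Fintype.sum_bijective _ (bijective_mul_centralizer_mul_inv hcinj hcclass hq (q i₀))
    _ _ fun ⟨i, p⟩ => ?_).symm
  have hconj := conj_mul_mul_inv_of_mem_centralizer p.2 (q i₀) (q i)
  rw [← hq, ← hq] at hconj
  have hconj_inv : (q i₀ * p * (q i)⁻¹)⁻¹ * (c i₀)⁻¹ * (q i₀ * p * (q i)⁻¹) = (c i)⁻¹ := by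
    rw [← hconj]; group
  simp only [hconj_inv]
  congr 2
  group

end Transversal

theorem quantum_double_FRC_decomposition_general
    {G : Type*} [Group G] [Fintype G]
    {𝒜 : Type*} [Ring 𝒜] [Algebra ℂ 𝒜]
    -- two families of ribbon operators and their concatenation
    (F₁ F₂ F : G → G → 𝒜)
    (hF : ∀ h g : G, F h g = ∑ k : G, F₁ h k * F₂ (k⁻¹ * h * k) (k⁻¹ * g))
    -- the conjugacy class `C = {c_1, …, c_{|C|}}`, representative `r_C`, iterators `q_i`
    (r : G) (nC : ℕ) (c : Fin nC → G) (q : Fin nC → G)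
    (hcinj : Function.Injective c)
    (hcclass : ∀ g : G, IsConj r g ↔ ∃ i, c i = g)
    (hq : ∀ i, c i = q i * r * (q i)⁻¹)
    -- the centralizer `N_C` of `r_C` in `G`
    (N : Subgroup G) [Fintype N] (hN : N = Subgroup.centralizer {r})
    -- an irreducible unitary matrix representation `R` of `N_C` of dimension `d_R`
    (dR : ℕ)
    (R : N →* Matrix (Fin dR) (Fin dR) ℂ)
    -- the representation-basis operators for each of the three families
    (F₁RC F₂RC FRC : Fin nC × Fin dR → Fin nC × Fin dR → 𝒜)
    (hF₁RC : ∀ u v : Fin nC × Fin dR, F₁RC u v =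
      ((dR : ℂ) / (Fintype.card N : ℂ)) •
        ∑ m : N, star (R m u.2 v.2) • F₁ (c u.1)⁻¹ (q u.1 * (m : G) * (q v.1)⁻¹))
    (hF₂RC : ∀ u v : Fin nC × Fin dR, F₂RC u v =
      ((dR : ℂ) / (Fintype.card N : ℂ)) •
        ∑ m : N, star (R m u.2 v.2) • F₂ (c u.1)⁻¹ (q u.1 * (m : G) * (q v.1)⁻¹))
    (hFRC : ∀ u v : Fin nC × Fin dR, FRC u v =
      ((dR : ℂ) / (Fintype.card N : ℂ)) •
        ∑ m : N, star (R m u.2 v.2) • F (c u.1)⁻¹ (q u.1 * (m : G) * (q v.1)⁻¹)) :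
    ∀ u w : Fin nC × Fin dR,
      FRC u w = ((Fintype.card N : ℂ) / (dR : ℂ)) •
        ∑ v : Fin nC × Fin dR, F₁RC u v * F₂RC v w := by
  intro u w
  subst hN
  set D : ℂ := (dR : ℂ) / (Fintype.card (Subgroup.centralizer {r}) : ℂ)
  let A (i : Fin nC) (p : Subgroup.centralizer {r}) := F₁ (c u.1)⁻¹ (q u.1 * p * (q i)⁻¹)
  let B (i : Fin nC) (n : Subgroup.centralizer {r}) := F₂ (c i)⁻¹ (q i * n * (q w.1)⁻¹)
  have hF_conv : ∀ m : Subgroup.centralizer {r},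
      F (c u.1)⁻¹ (q u.1 * m * (q w.1)⁻¹) = ∑ i, ∑ p, A i p * B i (p⁻¹ * m) := fun m => by
    simp only [hF, A, B, Subgroup.coe_mul, Subgroup.coe_inv,
      sum_concat_eq_sum_centralizer hcinj (fun g => (hcclass g).mp) hq]
  calc FRC u w = D • ∑ i, coeffTransform R u.2 w.2 (fun m => ∑ p, A i p * B i (p⁻¹ * m)) := by
        simp only [hFRC, hF_conv, coeffTransform, smul_sum]
        rw [sum_comm]
    _ = D • ∑ i, ∑ j, coeffTransform R u.2 j (A i) * coeffTransform R j w.2 (B i) := by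
        simp only [coeffTransform_convolution]
    _ = ((Fintype.card (Subgroup.centralizer {r}) : ℂ) / dR) •
          ∑ v : Fin nC × Fin dR, F₁RC u v * F₂RC v w := by
        simp only [hF₁RC, hF₂RC, smul_mul_smul_comm, ← smul_sum, smul_smul, Fintype.sum_prod_type]
        rw [← inv_div, ← mul_assoc, inv_mul_mul_self]
        rfl

/-- For the concatenation `F^{h,g} = Σ_k F₁^{h,k} F₂^{k⁻¹hk, k⁻¹g}` of Kitaev
ribbon operators on a ribbon `ρ = ρ₁ρ₂`, the representation-basis operators satisfy
`F^{RC;uw} = (|N_C|/d_R) Σ_v F₁^{RC;uv} F₂^{RC;vw}`. -/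
theorem quantum_double_FRC_decomposition
    {G : Type*} [Group G] [Fintype G] [DecidableEq G]
    {𝒜 : Type*} [Ring 𝒜] [Algebra ℂ 𝒜]
    -- two families of ribbon operators and their concatenation
    (F₁ F₂ F : G → G → 𝒜)
    (hF : ∀ h g : G, F h g = ∑ k : G, F₁ h k * F₂ (k⁻¹ * h * k) (k⁻¹ * g))
    -- the conjugacy class `C = {c_1, …, c_{|C|}}`, representative `r_C`, iterators `q_i`
    (r : G) (nC : ℕ) (c : Fin nC → G) (q : Fin nC → G)
    (hcinj : Function.Injective c)
    (hcclass : ∀ g : G, IsConj r g ↔ ∃ i, c i = g)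
    (hq : ∀ i, c i = q i * r * (q i)⁻¹)
    -- the centralizer `N_C` of `r_C` in `G`
    (N : Subgroup G) [Fintype N] (hN : N = Subgroup.centralizer {r})
    -- an irreducible unitary matrix representation `R` of `N_C` of dimension `d_R`
    (dR : ℕ) (hdR : 0 < dR)
    (R : N →* Matrix (Fin dR) (Fin dR) ℂ)
    (hRunitary : ∀ m, R m * star (R m) = 1)
    (hRirr : ∀ M : Matrix (Fin dR) (Fin dR) ℂ,
      (∀ m, R m * M = M * R m) → ∃ z : ℂ, M = z • (1 : Matrix (Fin dR) (Fin dR) ℂ))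
    -- the representation-basis operators for each of the three families
    (F₁RC F₂RC FRC : Fin nC × Fin dR → Fin nC × Fin dR → 𝒜)
    (hF₁RC : ∀ u v : Fin nC × Fin dR, F₁RC u v =
      ((dR : ℂ) / (Fintype.card N : ℂ)) •
        ∑ m : N, star (R m u.2 v.2) • F₁ (c u.1)⁻¹ (q u.1 * (m : G) * (q v.1)⁻¹))
    (hF₂RC : ∀ u v : Fin nC × Fin dR, F₂RC u v =
      ((dR : ℂ) / (Fintype.card N : ℂ)) •
        ∑ m : N, star (R m u.2 v.2) • F₂ (c u.1)⁻¹ (q u.1 * (m : G) * (q v.1)⁻¹))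
    (hFRC : ∀ u v : Fin nC × Fin dR, FRC u v =
      ((dR : ℂ) / (Fintype.card N : ℂ)) •
        ∑ m : N, star (R m u.2 v.2) • F (c u.1)⁻¹ (q u.1 * (m : G) * (q v.1)⁻¹)) :
    ∀ u w : Fin nC × Fin dR,
      FRC u w = ((Fintype.card N : ℂ) / (dR : ℂ)) •
        ∑ v : Fin nC × Fin dR, F₁RC u v * F₂RC v w :=
  quantum_double_FRC_decomposition_general F₁ F₂ F hF r nC c q hcinj hcclass hq N hN dR R F₁RC F₂RC
    FRC hF₁RC hF₂RC hFRC
end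

section
/- Define μ^{u₁u₂} : 𝒜 → 𝒜 by μ^{u₁u₂}(a) := (|N_C|/d_R)² Σ_{v∈I_{RC}} (F^{RC;u₁v})* a F^{RC;u₂v}. Then for all u₁, u₂ ∈ I_{RC} and all a, b ∈ 𝒜: (i) μ^{u₁u₂}(1) = δ_{u₁,u₂} · 1; (ii) μ^{u₁u₂}(a)* = μ^{u₂u₁}(a*); (iii) μ^{u₁u₂}(ab) = Σ_{u₃∈I_{RC}} μ^{u₁u₃}(a) μ^{u₃u₂}(b). -/
/-- The maps `μ^{u₁u₂}(a) = (|N_C|/d_R)² Σ_v (F^{RC;u₁v})* a F^{RC;u₂v}`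
associated to the representation-basis ribbon operators satisfy the amplimorphism relations:
(i) `μ^{u₁u₂}(1) = δ_{u₁,u₂} 1`; (ii) `μ^{u₁u₂}(a)* = μ^{u₂u₁}(a*)`;
(iii) `μ^{u₁u₂}(ab) = Σ_{u₃} μ^{u₁u₃}(a) μ^{u₃u₂}(b)`. -/
theorem quantum_double_amplimorphism_relations
    {G : Type*} [Group G] [Fintype G] [DecidableEq G]
    {𝒜 : Type*} [Ring 𝒜] [Algebra ℂ 𝒜] [StarRing 𝒜] [StarModule ℂ 𝒜]
    -- Kitaev ribbon operators on a positive finite ribbon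
    (F : G → G → 𝒜)
    (hFmul : ∀ h g h' g' : G, F h g * F h' g' = if g = g' then F (h' * h) g else 0)
    (hFstar : ∀ h g : G, star (F h g) = F h⁻¹ g)
    (hFsum : ∑ g : G, F 1 g = 1)
    -- the conjugacy class `C = {c_1, …, c_{|C|}}`, representative `r_C`, iterators `q_i`
    (r : G) (nC : ℕ) (c : Fin nC → G) (q : Fin nC → G)
    (hcinj : Function.Injective c)
    (hcclass : ∀ g : G, IsConj r g ↔ ∃ i, c i = g)
    (hq : ∀ i, c i = q i * r * (q i)⁻¹)
    -- the centralizer `N_C` of `r_C` in `G`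
    (N : Subgroup G) [Fintype N] (hN : N = Subgroup.centralizer {r})
    -- an irreducible unitary matrix representation `R` of `N_C` of dimension `d_R`
    (dR : ℕ) (hdR : 0 < dR)
    (R : N →* Matrix (Fin dR) (Fin dR) ℂ)
    (hRunitary : ∀ m, R m * star (R m) = 1)
    (hRirr : ∀ M : Matrix (Fin dR) (Fin dR) ℂ,
      (∀ m, R m * M = M * R m) → ∃ z : ℂ, M = z • (1 : Matrix (Fin dR) (Fin dR) ℂ))
    -- the ribbon operators in the representation basis
    (FRC : Fin nC × Fin dR → Fin nC × Fin dR → 𝒜)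
    (hFRC : ∀ u v : Fin nC × Fin dR, FRC u v =
      ((dR : ℂ) / (Fintype.card N : ℂ)) •
        ∑ m : N, star (R m u.2 v.2) • F (c u.1)⁻¹ (q u.1 * (m : G) * (q v.1)⁻¹))
    -- the maps `μ^{u₁u₂}`
    (μ : Fin nC × Fin dR → Fin nC × Fin dR → 𝒜 → 𝒜)
    (hμ : ∀ u₁ u₂ (a : 𝒜), μ u₁ u₂ a =
      ((Fintype.card N : ℂ) / (dR : ℂ)) ^ 2 •
        ∑ v : Fin nC × Fin dR, star (FRC u₁ v) * a * FRC u₂ v) :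
    (∀ u₁ u₂, μ u₁ u₂ 1 = if u₁ = u₂ then (1 : 𝒜) else 0) ∧
    (∀ u₁ u₂ (a : 𝒜), star (μ u₁ u₂ a) = μ u₂ u₁ (star a)) ∧
    (∀ u₁ u₂ (a b : 𝒜), μ u₁ u₂ (a * b) =
      ∑ u₃ : Fin nC × Fin dR, μ u₁ u₃ a * μ u₃ u₂ b) := by

  -- abbreviation for the scalar
  set kc : ℂ := (dR : ℂ) / (Fintype.card N : ℂ) with hkc
  -- the fundamental factorization bijection
  have hbij : ∀ x : G, ∃! p : Fin nC × N, q p.1 * (p.2 : G) = x := by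
    intro x
    obtain ⟨i, hi⟩ := (hcclass (x * r * x⁻¹)).1 (isConj_iff.2 ⟨x, rfl⟩)
    have h1 : q i * r * (q i)⁻¹ = x * r * x⁻¹ := (hq i).symm.trans hi
    have hmem : (q i)⁻¹ * x ∈ N := by
      rw [hN, Subgroup.mem_centralizer_iff]
      intro s hs
      rcases hs with rfl
      refine mul_left_cancel (a := q i) ?_
      calc q i * (s * ((q i)⁻¹ * x)) = (q i * s * (q i)⁻¹) * x := by group
        _ = (x * s * x⁻¹) * x := by rw [h1]
        _ = q i * ((q i)⁻¹ * x * s) := by group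
    refine ⟨(i, ⟨(q i)⁻¹ * x, hmem⟩), by simp, ?_⟩
    rintro ⟨i', m'⟩ hp
    simp only at hp
    have hm' : r * (m' : G) = (m' : G) * r := by
      have h2 : (m' : G) ∈ Subgroup.centralizer {r} := by rw [← hN]; exact m'.2
      exact Subgroup.mem_centralizer_iff.1 h2 r rfl
    have hmr : (m' : G) * r * (m' : G)⁻¹ = r := by
      rw [← hm', mul_inv_cancel_right]
    have hx : x * r * x⁻¹ = q i' * r * (q i')⁻¹ := by
      rw [← hp, mul_inv_rev,
        show q i' * ↑m' * r * ((↑m' : G)⁻¹ * (q i')⁻¹)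
          = q i' * (↑m' * r * (↑m' : G)⁻¹) * (q i')⁻¹ by group, hmr]
    have hii : i' = i := hcinj (((hq i').trans hx.symm).trans hi.symm)
    subst hii
    have hme : (m' : G) = (q i')⁻¹ * x := by rw [← hp, inv_mul_cancel_left]
    exact Prod.ext rfl (Subtype.ext hme)
  -- bijection variants
  have hbij1 : ∀ w x : G, ∃! p : Fin nC × N, q p.1 * (p.2 : G) * w = x := by
    intro w x
    obtain ⟨p₀, hp₀, hu⟩ := hbij (x * w⁻¹)
    refine ⟨p₀, ?_, ?_⟩
    · show q p₀.1 * (p₀.2 : G) * w = x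
      rw [hp₀, inv_mul_cancel_right]
    · intro p hp
      have hp' : q p.1 * (p.2 : G) * w = x := hp
      exact hu p (by rw [← hp', mul_inv_cancel_right])
  have hbij2 : ∀ z x : G, ∃! p : Fin nC × N, z * (p.2 : G) * (q p.1)⁻¹ = x := by
    intro z x
    obtain ⟨p₀, hp₀, hu⟩ := hbij (x⁻¹ * z)
    refine ⟨(p₀.1, p₀.2⁻¹), ?_, ?_⟩
    · show z * ((p₀.2⁻¹ : N) : G) * (q p₀.1)⁻¹ = x
      have h2 : ((p₀.2 : G))⁻¹ * (q p₀.1)⁻¹ = z⁻¹ * x := by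
        rw [← mul_inv_rev, hp₀]; group
      calc z * ((p₀.2⁻¹ : N) : G) * (q p₀.1)⁻¹
          = z * (((p₀.2 : G))⁻¹ * (q p₀.1)⁻¹) := by push_cast; rw [mul_assoc]
        _ = z * (z⁻¹ * x) := by rw [h2]
        _ = x := by group
    · rintro ⟨i, m⟩ h
      have h' : z * (m : G) * (q i)⁻¹ = x := h
      have h1 : q i * ((m⁻¹ : N) : G) = x⁻¹ * z := by
        push_cast
        rw [show x⁻¹ = (z * (m : G) * (q i)⁻¹)⁻¹ from by rw [h']]
        group
      have h3 := hu (i, m⁻¹) h1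
      have h4 : i = p₀.1 := congrArg Prod.fst h3
      have h5 : m⁻¹ = p₀.2 := congrArg Prod.snd h3
      exact Prod.ext h4 (by rw [← h5, inv_inv])
  -- sum reindexing
  have hsum1 : ∀ w : G, ∑ p : Fin nC × N, F 1 (q p.1 * (p.2 : G) * w) = 1 := by
    intro w
    rw [← hFsum]
    exact Fintype.sum_bijective _
      ((Function.bijective_iff_existsUnique _).2 (hbij1 w)) _ _ (fun p => rfl)
  have hsum2 : ∀ z : G, ∑ p : Fin nC × N, F 1 (z * (p.2 : G) * (q p.1)⁻¹) = 1 := by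
    intro z
    rw [← hFsum]
    exact Fintype.sum_bijective _
      ((Function.bijective_iff_existsUnique _).2 (hbij2 z)) _ _ (fun p => rfl)
  -- matrix orthogonality
  have hRow : ∀ (m : N) (j j' : Fin dR),
      ∑ t, R m j t * star (R m j' t) = if j = j' then 1 else 0 := by
    intro m j j'
    have h := congrArg (fun M : Matrix (Fin dR) (Fin dR) ℂ => M j j') (hRunitary m)
    simpa [Matrix.mul_apply, Matrix.star_apply, Matrix.one_apply] using h
  have hCol : ∀ (m : N) (j j' : Fin dR),
      ∑ t, star (R m t j) * R m t j' = if j = j' then 1 else 0 := by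
    intro m j j'
    have h1 : star (R m) * R m = 1 := by
      rw [mul_eq_one_comm]; exact hRunitary m
    have h := congrArg (fun M : Matrix (Fin dR) (Fin dR) ℂ => M j j') h1
    simpa [Matrix.mul_apply, Matrix.star_apply, Matrix.one_apply] using h
  -- star of FRC
  have hkcstar : star kc = kc := by
    simp [hkc]
  have hFRCstar : ∀ u v : Fin nC × Fin dR, star (FRC u v) =
      kc • ∑ m : N, (R m u.2 v.2) • F (c u.1) (q u.1 * (m : G) * (q v.1)⁻¹) := by
    intro u v
    rw [hFRC, star_smul, hkcstar, star_sum]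
    congr 1
    refine Finset.sum_congr rfl fun m _ => ?_
    rw [star_smul, star_star, hFstar, inv_inv]
  -- the term-by-term product, form 1
  have hterm1 : ∀ u₁ u₂ v : Fin nC × Fin dR, star (FRC u₁ v) * FRC u₂ v
      = (kc * kc) • ∑ m : N, ∑ m' : N,
          ((R m u₁.2 v.2) * star (R m' u₂.2 v.2)) •
          (if q u₁.1 * (m : G) * (q v.1)⁻¹ = q u₂.1 * (m' : G) * (q v.1)⁻¹
           then F ((c u₂.1)⁻¹ * c u₁.1) (q u₁.1 * (m : G) * (q v.1)⁻¹) else 0) := by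
    intro u₁ u₂ v
    rw [hFRCstar, hFRC, smul_mul_smul_comm, Finset.sum_mul_sum]
    congr 1
    refine Finset.sum_congr rfl fun m _ => Finset.sum_congr rfl fun m' _ => ?_
    rw [smul_mul_smul_comm, hFmul]
  -- orthogonality relation 1
  have hO1 : ∀ u₁ u₂ : Fin nC × Fin dR,
      ∑ v : Fin nC × Fin dR, star (FRC u₁ v) * FRC u₂ v
        = if u₁ = u₂ then (kc * kc) • (1 : 𝒜) else 0 := by
    intro u₁ u₂
    simp only [hterm1]
    rw [← Finset.smul_sum]
    by_cases h1 : u₁.1 = u₂.1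
    · have hcond : ∀ (v : Fin nC × Fin dR) (m m' : N),
          (q u₁.1 * (m : G) * (q v.1)⁻¹ = q u₂.1 * (m' : G) * (q v.1)⁻¹) ↔ m' = m := by
        intro v m m'
        rw [← h1]
        constructor
        · intro hcontra
          exact (Subtype.ext (mul_left_cancel (mul_right_cancel hcontra))).symm
        · rintro rfl; rfl
      have hcc : (c u₂.1)⁻¹ * c u₁.1 = 1 := by rw [← h1, inv_mul_cancel]
      simp only [hcond, hcc, smul_ite, smul_zero, Finset.sum_ite_eq',
        Finset.mem_univ, if_true]
      rw [Fintype.sum_prod_type]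
      have hswap : ∀ i' : Fin nC,
          (∑ j' : Fin dR, ∑ m : N, (R m u₁.2 j' * star (R m u₂.2 j')) •
            F 1 (q u₁.1 * (m : G) * (q i')⁻¹))
          = ∑ m : N, (if u₁.2 = u₂.2 then (1:ℂ) else 0) •
              F 1 (q u₁.1 * (m : G) * (q i')⁻¹) := by
        intro i'
        rw [Finset.sum_comm]
        refine Finset.sum_congr rfl fun m _ => ?_
        rw [← Finset.sum_smul, hRow]
      simp only [hswap, ite_smul, one_smul, zero_smul]
      by_cases h2 : u₁.2 = u₂.2
      · have hu12 : u₁ = u₂ := Prod.ext h1 h2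
        simp only [h2, if_true, hu12]
        congr 1
        rw [← hsum2 (q u₂.1), Fintype.sum_prod_type]
      · simp only [h2, if_false, Finset.sum_const_zero, smul_zero]
        rw [if_neg (fun hc => h2 (congrArg Prod.snd hc))]
    · have hcond : ∀ (v : Fin nC × Fin dR) (m m' : N),
          ¬ (q u₁.1 * (m : G) * (q v.1)⁻¹ = q u₂.1 * (m' : G) * (q v.1)⁻¹) := by
        intro v m m' hcontra
        have h2 : q u₂.1 * (m' : G) = q u₁.1 * (m : G) := (mul_right_cancel hcontra).symm
        obtain ⟨p₀, -, hu⟩ := hbij (q u₁.1 * (m : G))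
        have e1 := hu (u₁.1, m) rfl
        have e2 := hu (u₂.1, m') h2
        exact h1 ((Prod.ext_iff.1 (e1.trans e2.symm)).1)
      simp only [hcond, if_false, smul_zero, Finset.sum_const_zero]
      rw [if_neg (fun hc => h1 (congrArg Prod.fst hc))]
  -- the term-by-term product, form 2
  have hterm2 : ∀ (u₃ v v' : Fin nC × Fin dR), FRC u₃ v * star (FRC u₃ v')
      = (kc * kc) • ∑ m : N, ∑ m' : N,
          (star (R m u₃.2 v.2) * (R m' u₃.2 v'.2)) •
          (if q u₃.1 * (m : G) * (q v.1)⁻¹ = q u₃.1 * (m' : G) * (q v'.1)⁻¹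
           then F (c u₃.1 * (c u₃.1)⁻¹) (q u₃.1 * (m : G) * (q v.1)⁻¹) else 0) := by
    intro u₃ v v'
    rw [hFRC, hFRCstar, smul_mul_smul_comm, Finset.sum_mul_sum]
    congr 1
    refine Finset.sum_congr rfl fun m _ => Finset.sum_congr rfl fun m' _ => ?_
    rw [smul_mul_smul_comm, hFmul]
  -- orthogonality relation 2
  have hO2 : ∀ v v' : Fin nC × Fin dR,
      ∑ u₃ : Fin nC × Fin dR, FRC u₃ v * star (FRC u₃ v')
        = if v = v' then (kc * kc) • (1 : 𝒜) else 0 := by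
    intro v v'
    simp only [hterm2, mul_inv_cancel]
    rw [← Finset.smul_sum]
    by_cases h1 : v.1 = v'.1
    · have hcond : ∀ (u₃ : Fin nC × Fin dR) (m m' : N),
          (q u₃.1 * (m : G) * (q v.1)⁻¹ = q u₃.1 * (m' : G) * (q v'.1)⁻¹) ↔ m' = m := by
        intro u₃ m m'
        rw [← h1]
        constructor
        · intro hcontra
          have h2 : (m : G) * (q v.1)⁻¹ = (m' : G) * (q v.1)⁻¹ := mul_left_cancel
            (by rw [← mul_assoc, ← mul_assoc]; exact hcontra)
          exact (Subtype.ext (mul_right_cancel h2)).symm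
        · rintro rfl; rfl
      simp only [hcond, smul_ite, smul_zero, Finset.sum_ite_eq',
        Finset.mem_univ, if_true]
      rw [Fintype.sum_prod_type]
      have hswap : ∀ i : Fin nC,
          (∑ j : Fin dR, ∑ m : N, (star (R m j v.2) * (R m j v'.2)) •
            F 1 (q i * (m : G) * (q v.1)⁻¹))
          = ∑ m : N, (if v.2 = v'.2 then (1:ℂ) else 0) •
              F 1 (q i * (m : G) * (q v.1)⁻¹) := by
        intro i
        rw [Finset.sum_comm]
        refine Finset.sum_congr rfl fun m _ => ?_
        rw [← Finset.sum_smul, hCol]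
      simp only [hswap, ite_smul, one_smul, zero_smul]
      by_cases h2 : v.2 = v'.2
      · have hv12 : v = v' := Prod.ext h1 h2
        simp only [h2, if_true, hv12]
        congr 1
        rw [← hsum1 ((q v'.1)⁻¹), Fintype.sum_prod_type]
      · simp only [h2, if_false, Finset.sum_const_zero, smul_zero]
        rw [if_neg (fun hc => h2 (congrArg Prod.snd hc))]
    · have hcond : ∀ (u₃ : Fin nC × Fin dR) (m m' : N),
          ¬ (q u₃.1 * (m : G) * (q v.1)⁻¹ = q u₃.1 * (m' : G) * (q v'.1)⁻¹) := by
        intro u₃ m m' hcontra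
        have h2 : (q u₃.1 * (m : G) * (q v.1)⁻¹)⁻¹ = (q u₃.1 * (m' : G) * (q v'.1)⁻¹)⁻¹ :=
          congrArg _ hcontra
        have h3 : q v.1 * ((m⁻¹ : N) : G) = q v'.1 * ((m'⁻¹ : N) : G) * ((q u₃.1)⁻¹ * q u₃.1) := by
          push_cast
          rw [show q v.1 * ((m : G))⁻¹ = (q u₃.1 * (m : G) * (q v.1)⁻¹)⁻¹ * q u₃.1 by group, h2]
          group
        rw [inv_mul_cancel, mul_one] at h3
        obtain ⟨p₀, -, hu⟩ := hbij (q v.1 * ((m⁻¹ : N) : G))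
        have e1 := hu (v.1, m⁻¹) rfl
        have e2 := hu (v'.1, m'⁻¹) h3.symm
        exact h1 ((Prod.ext_iff.1 (e1.trans e2.symm)).1)
      simp only [hcond, if_false, smul_zero, Finset.sum_const_zero]
      rw [if_neg (fun hc => h1 (congrArg Prod.fst hc))]
  -- scalar arithmetic
  have hcard : (Fintype.card N : ℂ) ≠ 0 := Nat.cast_ne_zero.2 Fintype.card_ne_zero
  have hdR' : (dR : ℂ) ≠ 0 := Nat.cast_ne_zero.2 hdR.ne'
  have hsk : ((Fintype.card N : ℂ) / (dR : ℂ)) * kc = 1 := by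
    rw [hkc]; field_simp
  refine ⟨?_, ?_, ?_⟩
  · -- (i)
    intro u₁ u₂
    rw [hμ]
    simp only [mul_one]
    rw [hO1]
    by_cases h : u₁ = u₂
    · rw [if_pos h, if_pos h, smul_smul,
        show ((Fintype.card N : ℂ) / (dR : ℂ)) ^ 2 * (kc * kc)
          = (((Fintype.card N : ℂ) / (dR : ℂ)) * kc) ^ 2 by ring, hsk, one_pow, one_smul]
    · rw [if_neg h, if_neg h, smul_zero]
  · -- (ii)
    intro u₁ u₂ a
    rw [hμ, hμ, star_smul, star_sum]
    have hs2 : star (((Fintype.card N : ℂ) / (dR : ℂ)) ^ 2)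
        = ((Fintype.card N : ℂ) / (dR : ℂ)) ^ 2 := by simp
    rw [hs2]
    congr 1
    refine Finset.sum_congr rfl fun v _ => ?_
    calc star (star (FRC u₁ v) * a * FRC u₂ v)
        = star (FRC u₂ v) * (star a * star (star (FRC u₁ v))) := by rw [star_mul, star_mul]
      _ = star (FRC u₂ v) * star a * FRC u₁ v := by rw [star_star, ← mul_assoc]
  · -- (iii)
    intro u₁ u₂ a b
    have hRHS : ∀ u₃ : Fin nC × Fin dR, μ u₁ u₃ a * μ u₃ u₂ b
        = (((Fintype.card N : ℂ) / (dR : ℂ)) ^ 2 * ((Fintype.card N : ℂ) / (dR : ℂ)) ^ 2) •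
          ∑ v : Fin nC × Fin dR, ∑ v' : Fin nC × Fin dR,
            (star (FRC u₁ v) * a * FRC u₃ v) * (star (FRC u₃ v') * b * FRC u₂ v') := by
      intro u₃
      rw [hμ, hμ, smul_mul_smul_comm, Finset.sum_mul_sum]
    simp only [hRHS]
    rw [← Finset.smul_sum, Finset.sum_comm]
    have hinner : ∀ v : Fin nC × Fin dR,
        (∑ u₃ : Fin nC × Fin dR, ∑ v' : Fin nC × Fin dR,
          (star (FRC u₁ v) * a * FRC u₃ v) * (star (FRC u₃ v') * b * FRC u₂ v'))
        = (kc * kc) • (star (FRC u₁ v) * a * (b * FRC u₂ v)) := by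
      intro v
      rw [Finset.sum_comm]
      have hre : ∀ v' u₃ : Fin nC × Fin dR,
          (star (FRC u₁ v) * a * FRC u₃ v) * (star (FRC u₃ v') * b * FRC u₂ v')
          = ((star (FRC u₁ v) * a) * (FRC u₃ v * star (FRC u₃ v'))) * (b * FRC u₂ v') := by
        intro v' u₃; simp only [mul_assoc]
      calc (∑ v' : Fin nC × Fin dR, ∑ u₃ : Fin nC × Fin dR,
              (star (FRC u₁ v) * a * FRC u₃ v) * (star (FRC u₃ v') * b * FRC u₂ v'))
          = ∑ v' : Fin nC × Fin dR,
              ((star (FRC u₁ v) * a) *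
                (∑ u₃ : Fin nC × Fin dR, FRC u₃ v * star (FRC u₃ v'))) * (b * FRC u₂ v') := by
            refine Finset.sum_congr rfl fun v' _ => ?_
            rw [Finset.mul_sum, Finset.sum_mul]
            exact Finset.sum_congr rfl fun u₃ _ => hre v' u₃
        _ = ∑ v' : Fin nC × Fin dR,
              ((star (FRC u₁ v) * a) * (if v = v' then (kc * kc) • (1 : 𝒜) else 0)) *
                (b * FRC u₂ v') := by
            refine Finset.sum_congr rfl fun v' _ => ?_
            rw [hO2]
        _ = (kc * kc) • (star (FRC u₁ v) * a * (b * FRC u₂ v)) := by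
            simp only [mul_ite, ite_mul, mul_zero, zero_mul, Finset.sum_ite_eq,
              Finset.mem_univ, if_true, mul_smul_comm, smul_mul_assoc, mul_one]
    simp only [hinner]
    rw [← Finset.smul_sum, smul_smul, hμ,
      show ((Fintype.card N : ℂ) / (dR : ℂ)) ^ 2 * ((Fintype.card N : ℂ) / (dR : ℂ)) ^ 2 * (kc * kc)
        = ((Fintype.card N : ℂ) / (dR : ℂ)) ^ 2 * ((((Fintype.card N : ℂ) / (dR : ℂ)) * kc) ^ 2)
        by ring, hsk, one_pow, mul_one]
    congr 1
    exact Finset.sum_congr rfl fun v _ => by simp only [mul_assoc]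
end

section
/- For all u₁, u₂, v ∈ I_{RC}, the Wigner projector D^{RC;u₁} := (d_R/|N_C|) Σ_{m∈N_C} conj(R^{j₁j₁}(m)) A^{q_{i₁} m q_{i₁}⁻¹} B^{c_{i₁}} (with u₁ = (i₁,j₁)) satisfies D^{RC;u₁} F^{RC;u₂v} Ω = δ_{u₁,u₂} F^{RC;u₁v} Ω. -/
/-!
`A^k B^b` moves through `F^{h,g}` onto `Ω`, so `A^k B^b F^{h,g} Ω = δ_{hb,1} F^{khk⁻¹,kg} Ω`.
Hence `D^{RC;u₁}` kills `F^{RC;u₂v} Ω` unless `c_{i₁} = c_{i₂}`; otherwise, as `q m q⁻¹`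
centralises `c_i` for `m ∈ N_C`, it acts on `F^{RC;u₂v} Ω` by left translation of the second
label by `m`. The resulting coefficient is a convolution of matrix coefficients of `R`, which
Schur orthogonality evaluates to `δ_{j₁j₂}` times the coefficient of `F^{RC;u₁v}`.
-/

open Finset

lemma Matrix.mul_single_one_mul_apply {ι : Type*} [Fintype ι] [DecidableEq ι]
    (P Q : Matrix ι ι ℂ) (a b c d : ι) :
    (P * single a b (1 : ℂ) * Q) c d = P c a * Q b d := by
  simp [Matrix.mul_apply, Matrix.single_apply, ite_and]

section SchurOrthogonality

variable {N ι : Type*} [Group N] [Fintype ι] [DecidableEq ι] (R : N →* Matrix ι ι ℂ)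

lemma star_map_eq_map_inv (hRu : ∀ m, R m * star (R m) = 1) (m : N) :
    star (R m) = R m⁻¹ :=
  (left_inv_eq_right_inv (by rw [← map_mul, inv_mul_cancel, map_one]) (hRu m)).symm

variable [Fintype N]

lemma map_mul_sum_conj_comm (X : Matrix ι ι ℂ) (g : N) :
    R g * ∑ m, R m⁻¹ * X * R m = (∑ m, R m⁻¹ * X * R m) * R g := by
  rw [mul_sum, sum_mul]
  refine Fintype.sum_equiv (Equiv.mulRight g⁻¹) _ _ fun m => ?_
  simp only [Equiv.coe_mulRight, mul_inv_rev, inv_inv, map_mul, ← mul_assoc]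
  rw [mul_assoc _ (R g⁻¹), ← map_mul R g⁻¹ g, inv_mul_cancel, map_one, mul_one]

theorem sum_star_apply_mul_apply_eq_of_irreducible (hRu : ∀ m, R m * star (R m) = 1)
    (hRirr : ∀ M : Matrix ι ι ℂ, (∀ m, R m * M = M * R m) → ∃ z : ℂ, M = z • 1)
    (a b c d : ι) :
    ∑ m, star (R m a c) * R m b d =
      if a = b ∧ c = d then (Fintype.card N : ℂ) / Fintype.card ι else 0 := by
  -- the average of `R(m)⁻¹ E_{ab} R(m)` commutes with `R`, so it is a scalar, fixed by its trace
  set M := ∑ m, R m⁻¹ * Matrix.single a b 1 * R m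
  obtain ⟨z, hz⟩ := hRirr M (map_mul_sum_conj_comm R _)
  have hM : M c d = ∑ m, star (R m a c) * R m b d := by
    simp only [M, Matrix.sum_apply, Matrix.mul_single_one_mul_apply, ← star_map_eq_map_inv R hRu,
      Matrix.star_apply]
  have htrace : Matrix.trace M = Fintype.card N * if a = b then 1 else 0 := by
    simp only [M, Matrix.trace_sum, Matrix.trace_mul_cycle _ _ (R _), ← map_mul, mul_inv_cancel,
      map_one, one_mul]
    split_ifs with h <;> simp [h]
  have : Nonempty ι := ⟨a⟩
  have hcard : (Fintype.card ι : ℂ) ≠ 0 := Nat.cast_ne_zero.mpr Fintype.card_ne_zero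
  have hz' : z = Fintype.card N * (if a = b then 1 else 0) / Fintype.card ι := by
    rw [eq_div_iff hcard, ← htrace, hz, Matrix.trace_smul, Matrix.trace_one, smul_eq_mul]
  rw [← hM, hz, hz']
  by_cases hab : a = b <;> by_cases hcd : c = d <;> simp [hab, hcd]

theorem sum_map_mul_inv_apply_mul_apply_eq_of_irreducible (hRu : ∀ m, R m * star (R m) = 1)
    (hRirr : ∀ M : Matrix ι ι ℂ, (∀ m, R m * M = M * R m) → ∃ z : ℂ, M = z • 1)
    (p : N) (a b c d : ι) :
    ∑ n, R (p * n⁻¹) a b * R n c d =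
      if b = c then (Fintype.card N : ℂ) / Fintype.card ι * R p a d else 0 := by
  have hexpand : ∀ n, R (p * n⁻¹) a b = ∑ k, R p a k * star (R n b k) := fun n => by
    rw [map_mul, ← star_map_eq_map_inv R hRu, Matrix.mul_apply]
    rfl
  simp only [hexpand, sum_mul, mul_assoc]
  rw [sum_comm]
  simp only [← mul_sum, sum_star_apply_mul_apply_eq_of_irreducible R hRu hRirr, mul_ite, mul_zero,
    ite_and]
  split_ifs <;> simp [mul_comm]

theorem sum_star_apply_smul_convolution_eq {V : Type*} [AddCommGroup V] [Module ℂ V]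
    (hRu : ∀ m, R m * star (R m) = 1)
    (hRirr : ∀ M : Matrix ι ι ℂ, (∀ m, R m * M = M * R m) → ∃ z : ℂ, M = z • 1)
    (φ : N → V) (a b c d : ι) :
    ((Fintype.card ι : ℂ) / Fintype.card N) • ∑ n, star (R n c d) •
        (((Fintype.card ι : ℂ) / Fintype.card N) • ∑ m, star (R m a b) • φ (m * n)) =
      if b = c then ((Fintype.card ι : ℂ) / Fintype.card N) • ∑ p, star (R p a d) • φ p
      else 0 := by
  set s : ℂ := (Fintype.card ι : ℂ) / Fintype.card N
  have : Nonempty ι := ⟨a⟩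
  have hs : s * s * ((Fintype.card N : ℂ) / Fintype.card ι) = s := by
    have : (Fintype.card ι : ℂ) ≠ 0 := Nat.cast_ne_zero.mpr Fintype.card_ne_zero
    have : (Fintype.card N : ℂ) ≠ 0 := Nat.cast_ne_zero.mpr Fintype.card_ne_zero
    simp only [s]
    field_simp
  calc s • ∑ n, star (R n c d) • (s • ∑ m, star (R m a b) • φ (m * n))
      = ∑ n, ∑ p, (s * s * star (R (p * n⁻¹) a b * R n c d)) • φ p := by
        simp only [smul_sum, smul_smul]
        refine sum_congr rfl fun n _ => ?_
        refine Fintype.sum_equiv (Equiv.mulRight n) _ _ fun m => ?_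
        simp only [Equiv.coe_mulRight, mul_inv_cancel_right, star_mul']
        congr 1
        ring
    _ = ∑ p, (s * s * star (∑ n, R (p * n⁻¹) a b * R n c d)) • φ p := by
        rw [sum_comm]
        simp only [star_sum, mul_sum, sum_smul]
    _ = _ := by
        simp only [sum_map_mul_inv_apply_mul_apply_eq_of_irreducible R hRu hRirr]
        split_ifs
        · simp only [smul_sum, smul_smul, star_mul', star_div₀, star_natCast, ← mul_assoc, hs]
        · simp

end SchurOrthogonality

lemma gauge_mul_flux_apply_ribbon_vacuum {G H : Type*} [Group G] [DecidableEq G] [AddCommGroup H]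
    [Module ℂ H] [TopologicalSpace H] {F : G → G → H →L[ℂ] H} {A B : G → H →L[ℂ] H} {Ω : H}
    (hAF : ∀ k h g : G, A k * F h g = F (k * h * k⁻¹) (k * g) * A k)
    (hBF : ∀ k h g : G, B k * F h g = F h g * B (h * k))
    (hΩA : ∀ k : G, A k Ω = Ω) (hΩB : ∀ g : G, B g Ω = if g = 1 then Ω else 0) (k b h g : G) :
    (A k * B b) (F h g Ω) = if h * b = 1 then F (k * h * k⁻¹) (k * g) Ω else 0 := by
  have hB : B b (F h g Ω) = F h g (B (h * b) Ω) := by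
    rw [← mul_apply_eq_comp, hBF, mul_apply_eq_comp]
  rw [mul_apply_eq_comp, hB, hΩB]
  split_ifs
  · rw [← mul_apply_eq_comp, hAF, mul_apply_eq_comp, hΩA]
  · simp

theorem quantum_double_Wigner_projector_on_ribbon_state_general
    {G : Type*} [Group G] [DecidableEq G]
    {H : Type*} [NormedAddCommGroup H] [InnerProductSpace ℂ H]
    -- ribbon operators and gauge/flux operators at the initial site
    (F : G → G → H →L[ℂ] H) (A B : G → H →L[ℂ] H)
    (hAF : ∀ k h g : G, A k * F h g = F (k * h * k⁻¹) (k * g) * A k)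
    (hBF : ∀ k h g : G, B k * F h g = F h g * B (h * k))
    -- the ground state vector
    (Ω : H) (hΩA : ∀ k : G, A k Ω = Ω)
    (hΩB : ∀ g : G, B g Ω = if g = 1 then Ω else 0)
    -- the conjugacy class `C = {c_1, …, c_{|C|}}`, representative `r_C`, iterators `q_i`
    (r : G) (nC : ℕ) (c : Fin nC → G) (q : Fin nC → G)
    (hcinj : Function.Injective c)
    (hq : ∀ i, c i = q i * r * (q i)⁻¹)
    -- the centralizer `N_C` of `r_C` in `G`
    (N : Subgroup G) [Fintype N] (hN : N = Subgroup.centralizer {r})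
    -- an irreducible unitary matrix representation `R` of `N_C` of dimension `d_R`
    (dR : ℕ)
    (R : N →* Matrix (Fin dR) (Fin dR) ℂ)
    (hRunitary : ∀ m, R m * star (R m) = 1)
    (hRirr : ∀ M : Matrix (Fin dR) (Fin dR) ℂ,
      (∀ m, R m * M = M * R m) → ∃ z : ℂ, M = z • (1 : Matrix (Fin dR) (Fin dR) ℂ))
    -- the ribbon operators in the representation basis
    (FRC : Fin nC × Fin dR → Fin nC × Fin dR → H →L[ℂ] H)
    (hFRC : ∀ u v : Fin nC × Fin dR, FRC u v =
      ((dR : ℂ) / (Fintype.card N : ℂ)) •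
        ∑ m : N, star (R m u.2 v.2) • F (c u.1)⁻¹ (q u.1 * (m : G) * (q v.1)⁻¹))
    -- the Wigner projectors `D^{RC;u}`
    (D : Fin nC × Fin dR → H →L[ℂ] H)
    (hD : ∀ u : Fin nC × Fin dR, D u =
      ((dR : ℂ) / (Fintype.card N : ℂ)) •
        ∑ m : N, star (R m u.2 u.2) • (A (q u.1 * (m : G) * (q u.1)⁻¹) * B (c u.1))) :
    ∀ u₁ u₂ v : Fin nC × Fin dR,
      D u₁ (FRC u₂ v Ω) = if u₁ = u₂ then FRC u₁ v Ω else 0 := by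
  rintro ⟨i₁, j₁⟩ ⟨i₂, j₂⟩ ⟨i', j'⟩
  simp only [hD, hFRC, smul_apply, _root_.sum_apply, map_smul,
    map_sum, gauge_mul_flux_apply_ribbon_vacuum hAF hBF hΩA hΩB]
  by_cases hi : i₁ = i₂
  · subst hi
    have hfix : ∀ m : N,
        q i₁ * m * (q i₁)⁻¹ * (c i₁)⁻¹ * (q i₁ * m * (q i₁)⁻¹)⁻¹ = (c i₁)⁻¹ := fun m => by
      have hmem : (m : G) ∈ Subgroup.centralizer {r} := hN ▸ m.2
      have hm : Commute (m : G) r := Subgroup.mem_centralizer_singleton_iff.mp hmem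
      rw [hq]
      exact ((hm.conj _).inv_right).mul_inv_cancel
    have hmul : ∀ m n : N,
        q i₁ * m * (q i₁)⁻¹ * (q i₁ * n * (q i')⁻¹) = q i₁ * ↑(m * n) * (q i')⁻¹ := by
      intro m n
      simp [mul_assoc]
    simp only [inv_mul_cancel, if_true, hfix, hmul]
    convert sum_star_apply_smul_convolution_eq R hRunitary hRirr
      (fun p : N => F (c i₁)⁻¹ (q i₁ * p * (q i')⁻¹) Ω) j₁ j₁ j₂ j' using 2 <;> simp
  · have hc : ¬(c i₂)⁻¹ * c i₁ = 1 := by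
      rw [inv_mul_eq_one]
      exact fun h => hi (hcinj h).symm
    simp [hc, hi]

/-- With gauge and flux operators `A^k, B^k` at the initial site of a ribbon
and ground-state vector `Ω`, the Wigner projector
`D^{RC;u₁} = (d_R/|N_C|) Σ_m conj(R^{j₁j₁}(m)) A^{q_{i₁} m q_{i₁}⁻¹} B^{c_{i₁}}` satisfies
`D^{RC;u₁} F^{RC;u₂v} Ω = δ_{u₁,u₂} F^{RC;u₁v} Ω` for all `u₁, u₂, v ∈ I_{RC}`. -/
theorem quantum_double_Wigner_projector_on_ribbon_state
    {G : Type*} [Group G] [Fintype G] [DecidableEq G]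
    {H : Type*} [NormedAddCommGroup H] [InnerProductSpace ℂ H]
    -- ribbon operators and gauge/flux operators at the initial site
    (F : G → G → H →L[ℂ] H) (A B : G → H →L[ℂ] H)
    (hA1 : A 1 = 1)
    (hAmul : ∀ k l : G, A k * A l = A (k * l))
    (hBmul : ∀ k l : G, B k * B l = if k = l then B k else 0)
    (hAF : ∀ k h g : G, A k * F h g = F (k * h * k⁻¹) (k * g) * A k)
    (hBF : ∀ k h g : G, B k * F h g = F h g * B (h * k))
    -- the ground state vector
    (Ω : H) (hΩA : ∀ k : G, A k Ω = Ω)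
    (hΩB : ∀ g : G, B g Ω = if g = 1 then Ω else 0)
    -- the conjugacy class `C = {c_1, …, c_{|C|}}`, representative `r_C`, iterators `q_i`
    (r : G) (nC : ℕ) (c : Fin nC → G) (q : Fin nC → G)
    (hcinj : Function.Injective c)
    (hcclass : ∀ g : G, IsConj r g ↔ ∃ i, c i = g)
    (hq : ∀ i, c i = q i * r * (q i)⁻¹)
    -- the centralizer `N_C` of `r_C` in `G`
    (N : Subgroup G) [Fintype N] (hN : N = Subgroup.centralizer {r})
    -- an irreducible unitary matrix representation `R` of `N_C` of dimension `d_R`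
    (dR : ℕ) (hdR : 0 < dR)
    (R : N →* Matrix (Fin dR) (Fin dR) ℂ)
    (hRunitary : ∀ m, R m * star (R m) = 1)
    (hRirr : ∀ M : Matrix (Fin dR) (Fin dR) ℂ,
      (∀ m, R m * M = M * R m) → ∃ z : ℂ, M = z • (1 : Matrix (Fin dR) (Fin dR) ℂ))
    -- the ribbon operators in the representation basis
    (FRC : Fin nC × Fin dR → Fin nC × Fin dR → H →L[ℂ] H)
    (hFRC : ∀ u v : Fin nC × Fin dR, FRC u v =
      ((dR : ℂ) / (Fintype.card N : ℂ)) •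
        ∑ m : N, star (R m u.2 v.2) • F (c u.1)⁻¹ (q u.1 * (m : G) * (q v.1)⁻¹))
    -- the Wigner projectors `D^{RC;u}`
    (D : Fin nC × Fin dR → H →L[ℂ] H)
    (hD : ∀ u : Fin nC × Fin dR, D u =
      ((dR : ℂ) / (Fintype.card N : ℂ)) •
        ∑ m : N, star (R m u.2 u.2) • (A (q u.1 * (m : G) * (q u.1)⁻¹) * B (c u.1))) :
    ∀ u₁ u₂ v : Fin nC × Fin dR,
      D u₁ (FRC u₂ v Ω) = if u₁ = u₂ then FRC u₁ v Ω else 0 :=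
  quantum_double_Wigner_projector_on_ribbon_state_general F A B hAF hBF Ω hΩA hΩB r nC c q hcinj hq
    N hN dR R hRunitary hRirr FRC hFRC D hD
end

section
/- With L^h := Σ_{g∈G} F_{(1)}^{h,g}, one has L^h = Σ_{k₁,…,k_n∈G} ∏_{a=1}^{n} T_a^{k_a} L_a^{K_a⁻¹ h K_a}, where K_a := k₁k₂⋯k_a and the product over a is taken in increasing order. -/
/-- The Kitaev ribbon operators of a ribbon given by a list of block operator families
`b : G → G → 𝒜` (each block `b h k` may depend on the conjugated flux variable `h`), defined
by the concatenation law: `F_{[]}^{h,g} = δ_{g,1}·1` and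
`F_{b::rest}^{h,g} = Σ_k b^{h,k} F_{rest}^{k⁻¹hk, k⁻¹g}`. -/
def blockRibbonF {G : Type*} [Group G] [Fintype G] [DecidableEq G]
    {𝒜 : Type*} [Ring 𝒜] [Algebra ℂ 𝒜] :
    List (G → G → 𝒜) → G → G → 𝒜
  | [], _, g => if g = 1 then 1 else 0
  | b :: rest, h, g => ∑ k : G, b h k * blockRibbonF rest (k⁻¹ * h * k) (k⁻¹ * g)

private theorem alternating_ribbon_aux {G : Type*} [Group G] [Fintype G] [DecidableEq G]
    {𝒜 : Type*} [Ring 𝒜] [Algebra ℂ 𝒜] :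
    ∀ (n : ℕ) (T L : Fin n → G → 𝒜) (h : G),
      ∑ g : G, blockRibbonF ((List.ofFn fun a : Fin n =>
            [fun _ k => T a k, fun h' k => if k = 1 then L a h' else (0 : 𝒜)]).flatten) h g =
      ∑ k : Fin n → G, (List.ofFn fun a : Fin n =>
          T a (k a) * L a ((((List.ofFn k).take ((a : ℕ) + 1)).prod)⁻¹ * h *
              ((List.ofFn k).take ((a : ℕ) + 1)).prod)).prod
  | 0, T, L, h => by
    simp [blockRibbonF]
  | (n+1), T, L, h => by
    rw [List.ofFn_succ, List.flatten_cons]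
    simp only [List.cons_append, List.nil_append, blockRibbonF]
    simp only [ite_mul, zero_mul, Finset.mul_sum, Finset.sum_ite_eq', Finset.mem_univ, if_true,
      inv_one, one_mul, mul_one]
    rw [Finset.sum_comm]
    have key : ∀ k0 : G, ∑ g : G, T 0 k0 *
        (L 0 (k0⁻¹ * h * k0) * blockRibbonF
          ((List.ofFn fun a : Fin n =>
            [fun _ k => T a.succ k, fun h' k => if k = 1 then L a.succ h' else (0:𝒜)]).flatten)
          (k0⁻¹ * h * k0) (k0⁻¹ * g)) =
        T 0 k0 * L 0 (k0⁻¹ * h * k0) *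
          ∑ k : Fin n → G, (List.ofFn fun a : Fin n =>
            T a.succ (k a) * L a.succ ((((List.ofFn k).take ((a : ℕ) + 1)).prod)⁻¹ *
              (k0⁻¹ * h * k0) * ((List.ofFn k).take ((a : ℕ) + 1)).prod)).prod := by
      intro k0
      rw [← alternating_ribbon_aux n (fun a => T a.succ) (fun a => L a.succ) (k0⁻¹ * h * k0)]
      rw [Finset.mul_sum]
      simp only [← mul_assoc]
      exact Fintype.sum_bijective (fun g => k0⁻¹ * g) (Group.mulLeft_bijective k0⁻¹) _ _
        (fun g => rfl)
    rw [Finset.sum_congr rfl (fun k0 _ => key k0)]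
    rw [← (Fin.consEquiv fun _ : Fin (n+1) => G).sum_comp, Fintype.sum_prod_type]
    refine Finset.sum_congr rfl fun k0 _ => ?_
    rw [Finset.mul_sum]
    refine Finset.sum_congr rfl fun k' _ => ?_
    simp [Fin.consEquiv, List.ofFn_succ, Fin.cons_zero, Fin.cons_succ, List.take_succ_cons,
      mul_inv_rev, mul_assoc]

/-- For a ribbon with alternating decomposition into direct blocks `I_a`
(with operators `T_a`, independent of the flux variable) and dual blocks `J_a` (with operators
`L_a`), ordered `I₁, J₁, …, I_n, J_n`, one has
`L^h := Σ_g F₍₁₎^{h,g} = Σ_{k₁,…,k_n} ∏_a T_a^{k_a} L_a^{K_a⁻¹ h K_a}` where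
`K_a = k₁k₂⋯k_a`. -/
theorem alternating_ribbon_L_decomposition
    {G : Type*} [Group G] [Fintype G] [DecidableEq G]
    {𝒜 : Type*} [Ring 𝒜] [Algebra ℂ 𝒜]
    (n : ℕ) (hn : 1 ≤ n) (T L : Fin n → G → 𝒜) :
    ∀ h : G,
      ∑ g : G,
        blockRibbonF
          ((List.ofFn fun a : Fin n =>
            [fun _ k => T a k, fun h' k => if k = 1 then L a h' else (0 : 𝒜)]).flatten)
          h g =
      ∑ k : Fin n → G,
        (List.ofFn fun a : Fin n =>
          T a (k a) *
            L a ((((List.ofFn k).take ((a : ℕ) + 1)).prod)⁻¹ * h *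
              ((List.ofFn k).take ((a : ℕ) + 1)).prod)).prod := by
  exact fun h => alternating_ribbon_aux n T L h
end
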